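/- arXiv:math/0403108 — 14 statements merged into one kernel-verified Lean document; each statement's English description precedes it below -/
import Mathlib

section
/- Let α = (α₁, α₂) : I → ℂ² be a curve of type (3) with initial condition α(0) = (a₁, a₂). Then for every t ∈ I one has |α₁(t)|² − |α₂(t)|² = a₁² − a₂². -/
lemma normSq_hasDerivAt {α : ℝ → ℂ} {t : ℝ} (h : DifferentiableAt ℝ α t) :
    HasDerivAt (fun s => Complex.normSq (α s))
      (2 * (deriv α t * (starRingEnd ℂ) (α t)).re) t := by
  have hα : HasDerivAt α (deriv α t) t := h.hasDerivAt
  have hconj : HasDerivAt (fun s => (starRingEnd ℂ) (α s)) ((starRingEnd ℂ) (deriv α t)) t :=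
    hα.star
  have hmul := hα.mul hconj
  have hre := (Complex.reCLM.hasFDerivAt.comp_hasDerivAt t hmul.hasFDerivAt)
  have heq : (⇑Complex.reCLM ∘ (α * fun s => (starRingEnd ℂ) (α s)))
      = fun s => Complex.normSq (α s) := by
    funext s
    simp [Complex.mul_conj]
  rw [heq] at hre
  convert hre using 1
  · rfl
  · rfl
  simp only [Complex.reCLM_apply, Complex.add_re]
  have : (α t * (starRingEnd ℂ) (deriv α t)).re = (deriv α t * (starRingEnd ℂ) (α t)).re := by
    rw [← Complex.conj_re (α t * (starRingEnd ℂ) (deriv α t))]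
    simp [mul_comm]
  rw [this]; ring

/-- For a curve of type (3), `|α₁|² − |α₂|² = a₁² − a₂²` on `I`. -/
theorem stmt_0 (p q : ℕ) (a₁ a₂ : ℝ) (ha₁ : 0 < a₁) (ha₂ : 0 < a₂)
    (I : Set ℝ) (hIopen : IsOpen I) (hIconn : I.OrdConnected) (hI0 : (0 : ℝ) ∈ I)
    (α₁ α₂ : ℝ → ℂ)
    (hne : ∀ t ∈ I, α₁ t ≠ 0 ∧ α₂ t ≠ 0)
    (hdiff : ∀ t ∈ I, DifferentiableAt ℝ α₁ t ∧ DifferentiableAt ℝ α₂ t)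
    (hode₁ : ∀ t ∈ I, deriv α₁ t * (starRingEnd ℂ) (α₁ t) =
      Complex.I * ((starRingEnd ℂ) (α₁ t)) ^ (p + 1) * ((starRingEnd ℂ) (α₂ t)) ^ (q + 1))
    (hode₂ : ∀ t ∈ I, deriv α₂ t * (starRingEnd ℂ) (α₂ t) =
      Complex.I * ((starRingEnd ℂ) (α₁ t)) ^ (p + 1) * ((starRingEnd ℂ) (α₂ t)) ^ (q + 1))
    (hinit₁ : α₁ 0 = (a₁ : ℂ)) (hinit₂ : α₂ 0 = (a₂ : ℂ)) :
    ∀ t ∈ I, ‖α₁ t‖ ^ 2 - ‖α₂ t‖ ^ 2 = a₁ ^ 2 - a₂ ^ 2 := by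
  set f : ℝ → ℝ := fun s => Complex.normSq (α₁ s) - Complex.normSq (α₂ s) with hf
  have hconv : Convex ℝ I := convex_iff_ordConnected.mpr hIconn
  have hderiv : ∀ t ∈ I, HasDerivAt f 0 t := by
    intro t ht
    have h1 := normSq_hasDerivAt (hdiff t ht).1
    have h2 := normSq_hasDerivAt (hdiff t ht).2
    have := h1.sub h2
    rw [hode₁ t ht, hode₂ t ht, sub_self] at this
    exact this
  have hdiffOn : DifferentiableOn ℝ f I := fun t ht =>
    ((hderiv t ht).differentiableAt).differentiableWithinAt
  have hfd0 : ∀ t ∈ I, fderivWithin ℝ f I t = 0 := by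
    intro t ht
    rw [((hderiv t ht).hasFDerivAt.hasFDerivWithinAt).fderivWithin (hIopen.uniqueDiffOn t ht)]
    ext x
    simp
  intro t ht
  have hconst := hconv.is_const_of_fderivWithin_eq_zero hdiffOn hfd0 ht hI0
  have : f t = f 0 := hconst
  simp only [hf, hinit₁, hinit₂, Complex.normSq_ofReal] at this
  rw [Complex.sq_norm, Complex.sq_norm]
  linarith [this]
end

section
/- Let α = (α₁, α₂) : I → ℂ² be a curve of type (3) with initial condition α(0) = (a₁, a₂). Then the derivative of t ↦ α₁(t)^{p+1}·α₂(t)^{q+1} equals i·|α₁(t)|^{2p}·|α₂(t)|^{2q}·((p+1)|α₂(t)|² + (q+1)|α₁(t)|²), and consequently Re(α₁(t)^{p+1}·α₂(t)^{q+1}) = a₁^{p+1}·a₂^{q+1} for every t ∈ I. -/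
/-- derivative of `α₁^(p+1)·α₂^(q+1)` and constancy of its real part. -/
theorem stmt_1 (p q : ℕ) (a₁ a₂ : ℝ) (ha₁ : 0 < a₁) (ha₂ : 0 < a₂)
    (I : Set ℝ) (hIopen : IsOpen I) (hIconn : I.OrdConnected) (hI0 : (0 : ℝ) ∈ I)
    (α₁ α₂ : ℝ → ℂ)
    (hne : ∀ t ∈ I, α₁ t ≠ 0 ∧ α₂ t ≠ 0)
    (hdiff : ∀ t ∈ I, DifferentiableAt ℝ α₁ t ∧ DifferentiableAt ℝ α₂ t)
    (hode₁ : ∀ t ∈ I, deriv α₁ t * (starRingEnd ℂ) (α₁ t) =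
      Complex.I * ((starRingEnd ℂ) (α₁ t)) ^ (p + 1) * ((starRingEnd ℂ) (α₂ t)) ^ (q + 1))
    (hode₂ : ∀ t ∈ I, deriv α₂ t * (starRingEnd ℂ) (α₂ t) =
      Complex.I * ((starRingEnd ℂ) (α₁ t)) ^ (p + 1) * ((starRingEnd ℂ) (α₂ t)) ^ (q + 1))
    (hinit₁ : α₁ 0 = (a₁ : ℂ)) (hinit₂ : α₂ 0 = (a₂ : ℂ)) :
    (∀ t ∈ I, HasDerivAt (fun u => α₁ u ^ (p + 1) * α₂ u ^ (q + 1))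
      (Complex.I * (‖α₁ t‖ : ℂ) ^ (2 * p) * (‖α₂ t‖ : ℂ) ^ (2 * q) *
        (((p : ℂ) + 1) * (‖α₂ t‖ : ℂ) ^ 2 +
          ((q : ℂ) + 1) * (‖α₁ t‖ : ℂ) ^ 2)) t) ∧
    (∀ t ∈ I, (α₁ t ^ (p + 1) * α₂ t ^ (q + 1)).re = a₁ ^ (p + 1) * a₂ ^ (q + 1)) := by
  have key : ∀ t ∈ I, HasDerivAt (fun u => α₁ u ^ (p + 1) * α₂ u ^ (q + 1))
      (Complex.I * (‖α₁ t‖ : ℂ) ^ (2 * p) * (‖α₂ t‖ : ℂ) ^ (2 * q) *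
        (((p : ℂ) + 1) * (‖α₂ t‖ : ℂ) ^ 2 +
          ((q : ℂ) + 1) * (‖α₁ t‖ : ℂ) ^ 2)) t := by
    intro t ht
    obtain ⟨h1ne, h2ne⟩ := hne t ht
    obtain ⟨h1d, h2d⟩ := hdiff t ht
    have hc1 : (starRingEnd ℂ) (α₁ t) ≠ 0 := by simpa using h1ne
    have hc2 : (starRingEnd ℂ) (α₂ t) ≠ 0 := by simpa using h2ne
    have hd₁ : deriv α₁ t =
        Complex.I * ((starRingEnd ℂ) (α₁ t)) ^ p * ((starRingEnd ℂ) (α₂ t)) ^ (q + 1) := by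
      apply mul_right_cancel₀ hc1
      rw [hode₁ t ht]; ring
    have hd₂ : deriv α₂ t =
        Complex.I * ((starRingEnd ℂ) (α₁ t)) ^ (p + 1) * ((starRingEnd ℂ) (α₂ t)) ^ q := by
      apply mul_right_cancel₀ hc2
      rw [hode₂ t ht]; ring
    have H₁ : HasDerivAt α₁ (deriv α₁ t) t := h1d.hasDerivAt
    have H₂ : HasDerivAt α₂ (deriv α₂ t) t := h2d.hasDerivAt
    have Hp : HasDerivAt (fun u => α₁ u ^ (p + 1))
        ((↑(p + 1) : ℂ) * α₁ t ^ p * deriv α₁ t) t := by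
      simpa [Function.comp_def] using (hasDerivAt_pow (p + 1) (α₁ t)).comp t H₁
    have Hq : HasDerivAt (fun u => α₂ u ^ (q + 1))
        ((↑(q + 1) : ℂ) * α₂ t ^ q * deriv α₂ t) t := by
      simpa [Function.comp_def] using (hasDerivAt_pow (q + 1) (α₂ t)).comp t H₂
    have H := Hp.mul Hq
    simp only [hd₁, hd₂] at H
    have m1 : α₁ t * (starRingEnd ℂ) (α₁ t) = ((‖α₁ t‖ : ℂ)) ^ 2 := by
      rw [Complex.mul_conj, Complex.normSq_eq_norm_sq]; push_cast; ring
    have m2 : α₂ t * (starRingEnd ℂ) (α₂ t) = ((‖α₂ t‖ : ℂ)) ^ 2 := by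
      rw [Complex.mul_conj, Complex.normSq_eq_norm_sq]; push_cast; ring
    refine H.congr_deriv ?_; symm
    push_cast
    trans (Complex.I * ((↑p + 1) * (α₁ t * (starRingEnd ℂ) (α₁ t)) ^ p *
            (α₂ t * (starRingEnd ℂ) (α₂ t)) ^ (q + 1) +
          (↑q + 1) * (α₁ t * (starRingEnd ℂ) (α₁ t)) ^ (p + 1) *
            (α₂ t * (starRingEnd ℂ) (α₂ t)) ^ q))
    · rw [m1, m2]; ring
    · ring
  refine ⟨key, ?_⟩
  intro t ht
  have hconv : Convex ℝ I := by
    rw [convex_iff_ordConnected]; exact hIconn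
  set f : ℝ → ℂ := fun u => α₁ u ^ (p + 1) * α₂ u ^ (q + 1) with hf
  set g : ℝ → ℝ := fun u => (f u).re with hg
  have hgderiv : ∀ s ∈ I, HasDerivAt g 0 s := by
    intro s hs
    have := (Complex.reCLM.hasFDerivAt.comp_hasDerivAt s (key s hs))
    refine this.congr_deriv ?_
    simp [← Complex.ofReal_pow]
  have hgconst : g t = g 0 := by
    apply hconv.is_const_of_fderivWithin_eq_zero (f := g)
      (fun s hs => ((hgderiv s hs).differentiableAt).differentiableWithinAt)
      _ ht hI0
    intro s hs
    rw [fderivWithin_of_isOpen hIopen hs, ((hgderiv s hs).hasFDerivAt).fderiv]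
    ext x
    simp
  have hg0 : g 0 = a₁ ^ (p + 1) * a₂ ^ (q + 1) := by
    simp [hg, hf, hinit₁, hinit₂]
    push_cast
    simp [← Complex.ofReal_pow, ← Complex.ofReal_mul]
  calc (α₁ t ^ (p + 1) * α₂ t ^ (q + 1)).re = g t := rfl
    _ = g 0 := hgconst
    _ = _ := hg0
end

section
/- Let α = (α₁, α₂) : I → ℂ² be a curve of type (3) with initial condition α(0) = (a₁, a₂), where the interval I is symmetric about 0 (i.e., −t ∈ I whenever t ∈ I). Then conj(α_j(t)) = α_j(−t) for j = 1, 2 and all t ∈ I. -/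
open Set Complex Topology Filter

/-- on a symmetric interval, `conj (α_j t) = α_j (−t)`. -/
theorem stmt_2 (p q : ℕ) (a₁ a₂ : ℝ) (ha₁ : 0 < a₁) (ha₂ : 0 < a₂)
    (I : Set ℝ) (hIopen : IsOpen I) (hIconn : I.OrdConnected) (hI0 : (0 : ℝ) ∈ I)
    (α₁ α₂ : ℝ → ℂ)
    (hne : ∀ t ∈ I, α₁ t ≠ 0 ∧ α₂ t ≠ 0)
    (hdiff : ∀ t ∈ I, DifferentiableAt ℝ α₁ t ∧ DifferentiableAt ℝ α₂ t)
    (hode₁ : ∀ t ∈ I, deriv α₁ t * (starRingEnd ℂ) (α₁ t) =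
      Complex.I * ((starRingEnd ℂ) (α₁ t)) ^ (p + 1) * ((starRingEnd ℂ) (α₂ t)) ^ (q + 1))
    (hode₂ : ∀ t ∈ I, deriv α₂ t * (starRingEnd ℂ) (α₂ t) =
      Complex.I * ((starRingEnd ℂ) (α₁ t)) ^ (p + 1) * ((starRingEnd ℂ) (α₂ t)) ^ (q + 1))
    (hinit₁ : α₁ 0 = (a₁ : ℂ)) (hinit₂ : α₂ 0 = (a₂ : ℂ))
    (hsym : ∀ t ∈ I, -t ∈ I) :
    ∀ t ∈ I, (starRingEnd ℂ) (α₁ t) = α₁ (-t) ∧ (starRingEnd ℂ) (α₂ t) = α₂ (-t) := by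
  -- the conjugation as a smooth map
  have hconj : ContDiff ℝ 1 (fun z : ℂ => (starRingEnd ℂ) z) := by
    have := (Complex.conjCLE : ℂ ≃L[ℝ] ℂ).contDiff (n := 1)
    exact this
  -- the autonomous vector field
  set v : ℂ × ℂ → ℂ × ℂ := fun z =>
    (-Complex.I * ((starRingEnd ℂ) z.1) ^ p * ((starRingEnd ℂ) z.2) ^ (q + 1),
     -Complex.I * ((starRingEnd ℂ) z.1) ^ (p + 1) * ((starRingEnd ℂ) z.2) ^ q) with hv_def
  have hv_cd : ContDiff ℝ 1 v := by
    apply ContDiff.prodMk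
    · exact (contDiff_const.mul ((hconj.comp contDiff_fst).pow p)).mul
        ((hconj.comp contDiff_snd).pow (q + 1))
    · exact (contDiff_const.mul ((hconj.comp contDiff_fst).pow (p + 1))).mul
        ((hconj.comp contDiff_snd).pow q)
  -- the two solutions
  set F : ℝ → ℂ × ℂ := fun t => ((starRingEnd ℂ) (α₁ t), (starRingEnd ℂ) (α₂ t)) with hF_def
  set G : ℝ → ℂ × ℂ := fun t => (α₁ (-t), α₂ (-t)) with hG_def
  -- explicit derivatives of α₁, α₂ on I
  have hderiv₁ : ∀ t ∈ I, deriv α₁ t =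
      Complex.I * ((starRingEnd ℂ) (α₁ t)) ^ p * ((starRingEnd ℂ) (α₂ t)) ^ (q + 1) := by
    intro t ht
    have hc : (starRingEnd ℂ) (α₁ t) ≠ 0 := by
      simpa using (hne t ht).1
    apply mul_right_cancel₀ hc
    rw [hode₁ t ht]; ring
  have hderiv₂ : ∀ t ∈ I, deriv α₂ t =
      Complex.I * ((starRingEnd ℂ) (α₁ t)) ^ (p + 1) * ((starRingEnd ℂ) (α₂ t)) ^ q := by
    intro t ht
    have hc : (starRingEnd ℂ) (α₂ t) ≠ 0 := by
      simpa using (hne t ht).2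
    apply mul_right_cancel₀ hc
    rw [hode₂ t ht]; ring
  -- F solves the ODE
  have hF' : ∀ t ∈ I, HasDerivAt F (v (F t)) t := by
    intro t ht
    have h₁ : HasDerivAt α₁ (deriv α₁ t) t := (hdiff t ht).1.hasDerivAt
    have h₂ : HasDerivAt α₂ (deriv α₂ t) t := (hdiff t ht).2.hasDerivAt
    have hc₁ : HasDerivAt (fun s => (starRingEnd ℂ) (α₁ s))
        ((starRingEnd ℂ) (deriv α₁ t)) t := by
      have := (Complex.conjCLE.toContinuousLinearMap.hasFDerivAt
        (x := α₁ t)).comp_hasDerivAt t h₁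
      exact this
    have hc₂ : HasDerivAt (fun s => (starRingEnd ℂ) (α₂ s))
        ((starRingEnd ℂ) (deriv α₂ t)) t := by
      have := (Complex.conjCLE.toContinuousLinearMap.hasFDerivAt
        (x := α₂ t)).comp_hasDerivAt t h₂
      exact this
    have := hc₁.prodMk hc₂
    convert this using 2
    · rw [hderiv₁ t ht]
      simp [hv_def, hF_def, map_mul, map_pow, Complex.conj_I]
    · rw [hderiv₂ t ht]
      simp [hv_def, hF_def, map_mul, map_pow, Complex.conj_I]
  -- G solves the ODE
  have hG' : ∀ t ∈ I, HasDerivAt G (v (G t)) t := by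
    intro t ht
    have hmt : -t ∈ I := hsym t ht
    have h₁ : HasDerivAt α₁ (deriv α₁ (-t)) (-t) := (hdiff (-t) hmt).1.hasDerivAt
    have h₂ : HasDerivAt α₂ (deriv α₂ (-t)) (-t) := (hdiff (-t) hmt).2.hasDerivAt
    have hn : HasDerivAt (fun s : ℝ => -s) (-1 : ℝ) t := by
      exact hasDerivAt_neg' t
    have hg₁ : HasDerivAt (fun s => α₁ (-s)) ((-1 : ℝ) • deriv α₁ (-t)) t :=
      h₁.scomp t hn
    have hg₂ : HasDerivAt (fun s => α₂ (-s)) ((-1 : ℝ) • deriv α₂ (-t)) t :=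
      h₂.scomp t hn
    have := hg₁.prodMk hg₂
    convert this using 2
    · rw [hderiv₁ (-t) hmt]
      simp [hv_def, hG_def]
    · rw [hderiv₂ (-t) hmt]
      simp [hv_def, hG_def]
  -- continuity
  have hFc : ∀ t ∈ I, ContinuousAt F t := fun t ht => (hF' t ht).continuousAt
  have hGc : ∀ t ∈ I, ContinuousAt G t := fun t ht => (hG' t ht).continuousAt
  -- the set where the two solutions agree
  set S : Set ℝ := {t | t ∈ I ∧ F t = G t} with hS_def
  have hSopen : IsOpen S := by
    rw [isOpen_iff_mem_nhds]
    intro t₀ ht₀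
    obtain ⟨ht₀I, ht₀eq⟩ := ht₀
    obtain ⟨K, u, hu, hK⟩ := hv_cd.contDiffAt.exists_lipschitzOnWith (x := F t₀)
    have hInhds : I ∈ 𝓝 t₀ := hIopen.mem_nhds ht₀I
    have hFu : ∀ᶠ t in 𝓝 t₀, F t ∈ u := (hFc t₀ ht₀I).preimage_mem_nhds hu
    have hGu : ∀ᶠ t in 𝓝 t₀, G t ∈ u := by
      have : ContinuousAt G t₀ := hGc t₀ ht₀I
      have : Filter.Tendsto G (𝓝 t₀) (𝓝 (F t₀)) := ht₀eq ▸ this.tendsto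
      exact this hu
    have hfev : ∀ᶠ t in 𝓝 t₀, HasDerivAt F ((fun _ => v) t (F t)) t ∧ F t ∈ (fun _ => u) t := by
      filter_upwards [hInhds, hFu] with t ht hu'
      exact ⟨hF' t ht, hu'⟩
    have hgev : ∀ᶠ t in 𝓝 t₀, HasDerivAt G ((fun _ => v) t (G t)) t ∧ G t ∈ (fun _ => u) t := by
      filter_upwards [hInhds, hGu] with t ht hu'
      exact ⟨hG' t ht, hu'⟩
    have heq : F =ᶠ[𝓝 t₀] G :=
      ODE_solution_unique_of_eventually (v := fun _ => v) (s := fun _ => u) (K := K)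
        (Filter.Eventually.of_forall fun _ => hK) hfev hgev ht₀eq
    filter_upwards [hInhds, heq] with t ht he
    exact ⟨ht, he⟩
  -- I is preconnected
  have hIpre : IsPreconnected I := hIconn.isPreconnected
  -- 0 ∈ S
  have h0S : (0 : ℝ) ∈ S := by
    refine ⟨hI0, ?_⟩
    simp [hF_def, hG_def, hinit₁, hinit₂, Complex.conj_ofReal]
  -- closure condition
  have hclosure : closure S ∩ I ⊆ S := by
    rintro t ⟨htc, htI⟩
    refine ⟨htI, ?_⟩
    have hne' : (𝓝[S] t).NeBot := mem_closure_iff_nhdsWithin_neBot.mp htc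
    have h1 : Filter.Tendsto F (𝓝[S] t) (𝓝 (F t)) :=
      ((hFc t htI).continuousWithinAt).tendsto
    have h2 : Filter.Tendsto G (𝓝[S] t) (𝓝 (G t)) :=
      ((hGc t htI).continuousWithinAt).tendsto
    have h3 : Filter.Tendsto F (𝓝[S] t) (𝓝 (G t)) := by
      refine h2.congr' ?_
      filter_upwards [self_mem_nhdsWithin] with s hs
      exact hs.2.symm
    exact tendsto_nhds_unique h1 h3
  have hsub : I ⊆ S :=
    hIpre.subset_of_closure_inter_subset hSopen ⟨0, hI0, h0S⟩ hclosure
  intro t ht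
  have := (hsub ht).2
  have h1 : F t = G t := this
  constructor
  · exact congrArg Prod.fst h1
  · exact congrArg Prod.snd h1
end

section
/- Let α = (α₁, α₂) : I → ℂ² be a curve of type (3) with initial condition α(0) = (a₁, a₂), and suppose ρ_j : I → (0, ∞) and θ_j : I → ℝ are differentiable functions with α_j(t) = ρ_j(t)·exp(i·θ_j(t)) for j = 1, 2 and θ_j(0) = 0. Then for j = 1, 2 and all t ∈ I: ρ_j'(t)·ρ_j(t) = ρ₁(t)^{p+1}·ρ₂(t)^{q+1}·sin((p+1)θ₁(t) + (q+1)θ₂(t)) and ρ_j(t)²·θ_j'(t) = a₁^{p+1}·a₂^{q+1}. -/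
open Complex

/-- conjugate of polar form -/
lemma conj_polar (r th : ℝ) :
    (starRingEnd ℂ) ((r:ℂ) * Complex.exp (Complex.I * th)) = (r:ℂ) * Complex.exp (-(Complex.I * th)) := by
  simp [← Complex.exp_conj, map_mul, Complex.conj_ofReal]

lemma lhs_polar (r r' th th' : ℝ) :
    ((r':ℂ) + r * (Complex.I * th')) * Complex.exp (Complex.I*th) * ((r:ℂ) * Complex.exp (-(Complex.I*th)))
    = ((r'*r : ℝ) : ℂ) + ((r^2*th' : ℝ):ℂ) * Complex.I := by
  have h : Complex.exp (Complex.I*th) * Complex.exp (-(Complex.I*th)) = 1 := by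
    rw [← Complex.exp_add]; simp
  push_cast
  linear_combination (((r':ℂ) + r * (Complex.I * th')) * r) * h

lemma rhs_polar (m n : ℕ) (r₁ r₂ t₁ t₂ : ℝ) :
    Complex.I * ((r₁:ℂ) * Complex.exp (-(Complex.I*t₁)))^m * ((r₂:ℂ) * Complex.exp (-(Complex.I*t₂)))^n
    = ((r₁^m * r₂^n : ℝ):ℂ) * (((Real.sin ((m:ℝ)*t₁+(n:ℝ)*t₂) : ℝ):ℂ) + ((Real.cos ((m:ℝ)*t₁+(n:ℝ)*t₂):ℝ):ℂ) * Complex.I) := by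
  set X : ℝ := (m:ℝ)*t₁+(n:ℝ)*t₂ with hX
  have h : Complex.exp ((m:ℂ) * -(Complex.I*t₁)) * Complex.exp ((n:ℂ) * -(Complex.I*t₂))
      = ((Real.cos X : ℝ):ℂ) - ((Real.sin X:ℝ):ℂ)*Complex.I := by
    rw [← Complex.exp_add,
      show ((m:ℂ)*(-(Complex.I*t₁)) + (n:ℂ)*(-(Complex.I*t₂))) = ((-X : ℝ):ℂ)*Complex.I by
        rw [hX]; push_cast; ring,
      Complex.exp_mul_I, ← Complex.ofReal_cos, ← Complex.ofReal_sin, Real.cos_neg, Real.sin_neg]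
    push_cast; ring
  rw [mul_pow, mul_pow, ← Complex.exp_nat_mul, ← Complex.exp_nat_mul]
  simp only [Complex.ofReal_mul, Complex.ofReal_pow]
  linear_combination (Complex.I*((r₁:ℂ)^m*(r₂:ℂ)^n))*h - (((r₁:ℂ)^m*(r₂:ℂ)^n)*((Real.sin X:ℝ):ℂ)) * Complex.I_sq

/-- extraction of the two real equations from the complex ODE in polar form -/
lemma polar_extract (m n : ℕ) (r r' th th' r₁ r₂ t₁ t₂ : ℝ)
    (h : ((r':ℂ) + r * (Complex.I * th')) * Complex.exp (Complex.I*th) *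
        (starRingEnd ℂ) ((r:ℂ) * Complex.exp (Complex.I*th)) =
      Complex.I * ((starRingEnd ℂ) ((r₁:ℂ) * Complex.exp (Complex.I*t₁)))^m *
        ((starRingEnd ℂ) ((r₂:ℂ) * Complex.exp (Complex.I*t₂)))^n) :
    r' * r = r₁^m * r₂^n * Real.sin ((m:ℝ)*t₁+(n:ℝ)*t₂) ∧
    r^2 * th' = r₁^m * r₂^n * Real.cos ((m:ℝ)*t₁+(n:ℝ)*t₂) := by
  rw [conj_polar, conj_polar, conj_polar, lhs_polar, rhs_polar] at h
  rw [Complex.ext_iff] at h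
  obtain ⟨hre, him⟩ := h
  simp only [Complex.add_re, Complex.add_im, Complex.mul_re, Complex.mul_im,
    Complex.ofReal_re, Complex.ofReal_im, Complex.I_re, Complex.I_im,
    mul_zero, zero_mul, mul_one, sub_zero, add_zero, zero_add, zero_sub, neg_zero] at hre him
  exact ⟨hre, him⟩

/-- polar coordinates of a curve of type (3) satisfy equations (4) and (5). -/
theorem stmt_3 (p q : ℕ) (a₁ a₂ : ℝ) (ha₁ : 0 < a₁) (ha₂ : 0 < a₂)
    (I : Set ℝ) (hIopen : IsOpen I) (hIconn : I.OrdConnected) (hI0 : (0 : ℝ) ∈ I)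
    (α₁ α₂ : ℝ → ℂ)
    (hne : ∀ t ∈ I, α₁ t ≠ 0 ∧ α₂ t ≠ 0)
    (hdiff : ∀ t ∈ I, DifferentiableAt ℝ α₁ t ∧ DifferentiableAt ℝ α₂ t)
    (hode₁ : ∀ t ∈ I, deriv α₁ t * (starRingEnd ℂ) (α₁ t) =
      Complex.I * ((starRingEnd ℂ) (α₁ t)) ^ (p + 1) * ((starRingEnd ℂ) (α₂ t)) ^ (q + 1))
    (hode₂ : ∀ t ∈ I, deriv α₂ t * (starRingEnd ℂ) (α₂ t) =
      Complex.I * ((starRingEnd ℂ) (α₁ t)) ^ (p + 1) * ((starRingEnd ℂ) (α₂ t)) ^ (q + 1))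
    (hinit₁ : α₁ 0 = (a₁ : ℂ)) (hinit₂ : α₂ 0 = (a₂ : ℂ))
    (ρ₁ ρ₂ θ₁ θ₂ : ℝ → ℝ)
    (hρpos : ∀ t ∈ I, 0 < ρ₁ t ∧ 0 < ρ₂ t)
    (hρθdiff : ∀ t ∈ I, DifferentiableAt ℝ ρ₁ t ∧ DifferentiableAt ℝ ρ₂ t ∧
      DifferentiableAt ℝ θ₁ t ∧ DifferentiableAt ℝ θ₂ t)
    (hpolar₁ : ∀ t ∈ I, α₁ t = (ρ₁ t : ℂ) * Complex.exp (Complex.I * (θ₁ t : ℂ)))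
    (hpolar₂ : ∀ t ∈ I, α₂ t = (ρ₂ t : ℂ) * Complex.exp (Complex.I * (θ₂ t : ℂ)))
    (hθ₁0 : θ₁ 0 = 0) (hθ₂0 : θ₂ 0 = 0) :
    ∀ t ∈ I,
      (deriv ρ₁ t * ρ₁ t =
        ρ₁ t ^ (p + 1) * ρ₂ t ^ (q + 1) * Real.sin (((p : ℝ) + 1) * θ₁ t + ((q : ℝ) + 1) * θ₂ t)) ∧
      (deriv ρ₂ t * ρ₂ t =
        ρ₁ t ^ (p + 1) * ρ₂ t ^ (q + 1) * Real.sin (((p : ℝ) + 1) * θ₁ t + ((q : ℝ) + 1) * θ₂ t)) ∧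
      (ρ₁ t ^ 2 * deriv θ₁ t = a₁ ^ (p + 1) * a₂ ^ (q + 1)) ∧
      (ρ₂ t ^ 2 * deriv θ₂ t = a₁ ^ (p + 1) * a₂ ^ (q + 1)) := by
  -- abbreviations
  set Φ : ℝ → ℝ := fun s => ((p:ℝ)+1) * θ₁ s + ((q:ℝ)+1) * θ₂ s with hΦ
  -- derivative of the polar expression
  have hderiv₁ : ∀ t ∈ I, deriv α₁ t =
      (((deriv ρ₁ t : ℝ) : ℂ) + (ρ₁ t : ℂ) * (Complex.I * ((deriv θ₁ t : ℝ) : ℂ))) *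
        Complex.exp (Complex.I * (θ₁ t : ℂ)) := by
    intro t ht
    obtain ⟨hρ₁d, hρ₂d, hθ₁d, hθ₂d⟩ := hρθdiff t ht
    have hd : HasDerivAt (fun s => (ρ₁ s : ℂ) * Complex.exp (Complex.I * (θ₁ s : ℂ)))
        (((deriv ρ₁ t : ℝ) : ℂ) * Complex.exp (Complex.I * (θ₁ t : ℂ)) +
          (ρ₁ t : ℂ) * (Complex.exp (Complex.I * (θ₁ t : ℂ)) * (Complex.I * ((deriv θ₁ t : ℝ) : ℂ)))) t :=
      (hρ₁d.hasDerivAt.ofReal_comp).mul ((hθ₁d.hasDerivAt.ofReal_comp.const_mul Complex.I).cexp)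
    have hev : α₁ =ᶠ[nhds t] fun s => (ρ₁ s : ℂ) * Complex.exp (Complex.I * (θ₁ s : ℂ)) := by
      filter_upwards [hIopen.mem_nhds ht] with s hs using hpolar₁ s hs
    rw [hev.deriv_eq, hd.deriv]; ring
  have hderiv₂ : ∀ t ∈ I, deriv α₂ t =
      (((deriv ρ₂ t : ℝ) : ℂ) + (ρ₂ t : ℂ) * (Complex.I * ((deriv θ₂ t : ℝ) : ℂ))) *
        Complex.exp (Complex.I * (θ₂ t : ℂ)) := by
    intro t ht
    obtain ⟨hρ₁d, hρ₂d, hθ₁d, hθ₂d⟩ := hρθdiff t ht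
    have hd : HasDerivAt (fun s => (ρ₂ s : ℂ) * Complex.exp (Complex.I * (θ₂ s : ℂ)))
        (((deriv ρ₂ t : ℝ) : ℂ) * Complex.exp (Complex.I * (θ₂ t : ℂ)) +
          (ρ₂ t : ℂ) * (Complex.exp (Complex.I * (θ₂ t : ℂ)) * (Complex.I * ((deriv θ₂ t : ℝ) : ℂ)))) t :=
      (hρ₂d.hasDerivAt.ofReal_comp).mul ((hθ₂d.hasDerivAt.ofReal_comp.const_mul Complex.I).cexp)
    have hev : α₂ =ᶠ[nhds t] fun s => (ρ₂ s : ℂ) * Complex.exp (Complex.I * (θ₂ s : ℂ)) := by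
      filter_upwards [hIopen.mem_nhds ht] with s hs using hpolar₂ s hs
    rw [hev.deriv_eq, hd.deriv]; ring
  -- the local polar equations
  have hcast : ∀ s : ℝ, ((p+1 : ℕ):ℝ) * θ₁ s + ((q+1 : ℕ):ℝ) * θ₂ s = Φ s := by
    intro s; rw [hΦ]; push_cast; ring
  have key : ∀ t ∈ I,
      (deriv ρ₁ t * ρ₁ t = ρ₁ t ^ (p+1) * ρ₂ t ^ (q+1) * Real.sin (Φ t)) ∧
      (deriv ρ₂ t * ρ₂ t = ρ₁ t ^ (p+1) * ρ₂ t ^ (q+1) * Real.sin (Φ t)) ∧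
      (ρ₁ t ^ 2 * deriv θ₁ t = ρ₁ t ^ (p+1) * ρ₂ t ^ (q+1) * Real.cos (Φ t)) ∧
      (ρ₂ t ^ 2 * deriv θ₂ t = ρ₁ t ^ (p+1) * ρ₂ t ^ (q+1) * Real.cos (Φ t)) := by
    intro t ht
    have h₁ := hode₁ t ht
    have h₂ := hode₂ t ht
    rw [hderiv₁ t ht, hpolar₁ t ht, hpolar₂ t ht] at h₁
    rw [hderiv₂ t ht, hpolar₁ t ht, hpolar₂ t ht] at h₂
    have e₁ := polar_extract (p+1) (q+1) (ρ₁ t) (deriv ρ₁ t) (θ₁ t) (deriv θ₁ t)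
      (ρ₁ t) (ρ₂ t) (θ₁ t) (θ₂ t) h₁
    have e₂ := polar_extract (p+1) (q+1) (ρ₂ t) (deriv ρ₂ t) (θ₂ t) (deriv θ₂ t)
      (ρ₁ t) (ρ₂ t) (θ₁ t) (θ₂ t) h₂
    rw [hcast t] at e₁ e₂
    exact ⟨e₁.1, e₂.1, e₁.2, e₂.2⟩
  -- the conserved quantity
  set g : ℝ → ℝ := fun s => ρ₁ s ^ (p+1) * ρ₂ s ^ (q+1) * Real.cos (Φ s) with hg
  have hgderiv : ∀ t ∈ I, HasDerivAt g 0 t := by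
    intro t ht
    obtain ⟨hρ₁d, hρ₂d, hθ₁d, hθ₂d⟩ := hρθdiff t ht
    obtain ⟨k1, k2, k3, k4⟩ := key t ht
    obtain ⟨hρ₁p, hρ₂p⟩ := hρpos t ht
    have hd : HasDerivAt g
        ((((p+1:ℕ):ℝ) * ρ₁ t ^ (p+1-1) * deriv ρ₁ t * ρ₂ t ^ (q+1) +
          ρ₁ t ^ (p+1) * (((q+1:ℕ):ℝ) * ρ₂ t ^ (q+1-1) * deriv ρ₂ t)) * Real.cos (Φ t) +
          ρ₁ t ^ (p+1) * ρ₂ t ^ (q+1) *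
            (-Real.sin (Φ t) * (((p:ℝ)+1) * deriv θ₁ t + ((q:ℝ)+1) * deriv θ₂ t))) t := by
      exact ((hρ₁d.hasDerivAt.pow (p+1)).mul (hρ₂d.hasDerivAt.pow (q+1))).mul
        (((hθ₁d.hasDerivAt.const_mul ((p:ℝ)+1)).add (hθ₂d.hasDerivAt.const_mul ((q:ℝ)+1))).cos)
    have hval : (((p+1:ℕ):ℝ) * ρ₁ t ^ (p+1-1) * deriv ρ₁ t * ρ₂ t ^ (q+1) +
          ρ₁ t ^ (p+1) * (((q+1:ℕ):ℝ) * ρ₂ t ^ (q+1-1) * deriv ρ₂ t)) * Real.cos (Φ t) +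
          ρ₁ t ^ (p+1) * ρ₂ t ^ (q+1) *
            (-Real.sin (Φ t) * (((p:ℝ)+1) * deriv θ₁ t + ((q:ℝ)+1) * deriv θ₂ t)) = 0 := by
      have hmul : ((((p+1:ℕ):ℝ) * ρ₁ t ^ (p+1-1) * deriv ρ₁ t * ρ₂ t ^ (q+1) +
          ρ₁ t ^ (p+1) * (((q+1:ℕ):ℝ) * ρ₂ t ^ (q+1-1) * deriv ρ₂ t)) * Real.cos (Φ t) +
          ρ₁ t ^ (p+1) * ρ₂ t ^ (q+1) *
            (-Real.sin (Φ t) * (((p:ℝ)+1) * deriv θ₁ t + ((q:ℝ)+1) * deriv θ₂ t))) *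
            (ρ₁ t ^ 2 * ρ₂ t ^ 2) = 0 := by
        simp only [Nat.add_sub_cancel]
        push_cast
        linear_combination
          (((p:ℝ)+1) * ρ₁ t ^ (p+1) * ρ₂ t ^ (q+1) * ρ₂ t ^ 2 * Real.cos (Φ t)) * k1 +
          (((q:ℝ)+1) * ρ₂ t ^ (q+1) * ρ₁ t ^ (p+1) * ρ₁ t ^ 2 * Real.cos (Φ t)) * k2 -
          (((p:ℝ)+1) * ρ₁ t ^ (p+1) * ρ₂ t ^ (q+1) * ρ₂ t ^ 2 * Real.sin (Φ t)) * k3 -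
          (((q:ℝ)+1) * ρ₁ t ^ (p+1) * ρ₂ t ^ (q+1) * ρ₁ t ^ 2 * Real.sin (Φ t)) * k4
      have hne2 : (ρ₁ t ^ 2 * ρ₂ t ^ 2) ≠ 0 := by positivity
      exact (mul_eq_zero.mp hmul).resolve_right hne2
    rw [hval] at hd
    exact hd
  -- g is constant on I
  have hIconv : Convex ℝ I := hIconn.convex
  have hgconst : ∀ t ∈ I, g t = g 0 := by
    intro t ht
    exact hIconv.is_const_of_fderivWithin_eq_zero
      (fun s hs => ((hgderiv s hs).differentiableAt).differentiableWithinAt)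
      (fun s hs => by
        have h0 := ((hgderiv s hs).hasFDerivAt.hasFDerivWithinAt).fderivWithin
          (hIopen.uniqueDiffWithinAt hs)
        rw [h0]; ext x; simp)
      ht hI0
  -- initial values
  have hρ₁0 : ρ₁ 0 = a₁ := by
    have := hpolar₁ 0 hI0
    rw [hinit₁, hθ₁0] at this
    simpa using (Complex.ofReal_inj.mp (by simpa using this)).symm
  have hρ₂0 : ρ₂ 0 = a₂ := by
    have := hpolar₂ 0 hI0
    rw [hinit₂, hθ₂0] at this
    simpa using (Complex.ofReal_inj.mp (by simpa using this)).symm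
  have hg0 : g 0 = a₁ ^ (p+1) * a₂ ^ (q+1) := by
    rw [hg]; simp [hρ₁0, hρ₂0, hΦ, hθ₁0, hθ₂0]
  -- conclusion
  intro t ht
  obtain ⟨k1, k2, k3, k4⟩ := key t ht
  have hgt : ρ₁ t ^ (p+1) * ρ₂ t ^ (q+1) * Real.cos (Φ t) = a₁ ^ (p+1) * a₂ ^ (q+1) := by
    rw [← hg0]; exact hgconst t ht
  exact ⟨k1, k2, by rw [k3, hgt], by rw [k4, hgt]⟩
end

section
/- Let γ = (γ₁, γ₂) : I' → ℂ² be a curve of type (6) with initial condition γ(0) = (b₁, b₂). Then Re(γ₁(t)^{p+1}·γ₂(t)^{q+1}) = b₁^{p+1}·b₂^{q+1} for every t ∈ I'. -/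
/-- For a curve of type (6), `Re (γ₁^(p+1)·γ₂^(q+1)) = b₁^(p+1)·b₂^(q+1)` on `I'`. -/
theorem stmt_6 (p q : ℕ) (b₁ b₂ : ℝ) (hb₁ : 0 < b₁) (hb₂ : 0 < b₂)
    (I' : Set ℝ) (hIopen : IsOpen I') (hIconn : I'.OrdConnected) (hI0 : (0 : ℝ) ∈ I')
    (γ₁ γ₂ : ℝ → ℂ)
    (hγne : ∀ t ∈ I', γ₁ t ≠ 0 ∧ γ₂ t ≠ 0)
    (hγdiff : ∀ t ∈ I', DifferentiableAt ℝ γ₁ t ∧ DifferentiableAt ℝ γ₂ t)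
    (hγode₁ : ∀ t ∈ I', deriv γ₁ t * (starRingEnd ℂ) (γ₁ t) =
      Complex.I * ((starRingEnd ℂ) (γ₁ t)) ^ (p + 1) * ((starRingEnd ℂ) (γ₂ t)) ^ (q + 1))
    (hγode₂ : ∀ t ∈ I', deriv γ₂ t * (starRingEnd ℂ) (γ₂ t) =
      -(Complex.I * ((starRingEnd ℂ) (γ₁ t)) ^ (p + 1) * ((starRingEnd ℂ) (γ₂ t)) ^ (q + 1)))
    (hγinit₁ : γ₁ 0 = (b₁ : ℂ)) (hγinit₂ : γ₂ 0 = (b₂ : ℂ)) :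
    ∀ t ∈ I', (γ₁ t ^ (p + 1) * γ₂ t ^ (q + 1)).re = b₁ ^ (p + 1) * b₂ ^ (q + 1) := by
  set g : ℝ → ℝ := fun t => (γ₁ t ^ (p + 1) * γ₂ t ^ (q + 1)).re with hg
  have key : ∀ t ∈ I', HasDerivAt g 0 t := by
    intro t ht
    obtain ⟨ha, hb⟩ := hγne t ht
    have hca : (starRingEnd ℂ) (γ₁ t) ≠ 0 := by simpa using ha
    have hcb : (starRingEnd ℂ) (γ₂ t) ≠ 0 := by simpa using hb
    -- solve the ODEs for the derivatives
    have ha' : deriv γ₁ t =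
        Complex.I * ((starRingEnd ℂ) (γ₁ t)) ^ p * ((starRingEnd ℂ) (γ₂ t)) ^ (q + 1) := by
      apply mul_right_cancel₀ hca
      rw [hγode₁ t ht]; ring
    have hb' : deriv γ₂ t =
        -(Complex.I * ((starRingEnd ℂ) (γ₁ t)) ^ (p + 1) * ((starRingEnd ℂ) (γ₂ t)) ^ q) := by
      apply mul_right_cancel₀ hcb
      rw [hγode₂ t ht]; ring
    have hf1 : HasDerivAt γ₁ (deriv γ₁ t) t := (hγdiff t ht).1.hasDerivAt
    have hf2 : HasDerivAt γ₂ (deriv γ₂ t) t := (hγdiff t ht).2.hasDerivAt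
    have hF : HasDerivAt (fun s => γ₁ s ^ (p + 1) * γ₂ s ^ (q + 1))
        ((↑(p + 1) * γ₁ t ^ p * deriv γ₁ t) * γ₂ t ^ (q + 1)
          + γ₁ t ^ (p + 1) * (↑(q + 1) * γ₂ t ^ q * deriv γ₂ t)) t := by
      have h1 : HasDerivAt (fun s => γ₁ s ^ (p + 1)) (↑(p + 1) * γ₁ t ^ p * deriv γ₁ t) t := by
        have h := ((hasDerivAt_pow (p + 1) (γ₁ t)).hasFDerivAt.restrictScalars
          ℝ).comp_hasDerivAt t hf1
        convert h using 1
        · rfl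
        · rfl
        change _ = deriv γ₁ t • (↑(p + 1) * γ₁ t ^ (p + 1 - 1))
        simp [mul_comm]
      have h2 : HasDerivAt (fun s => γ₂ s ^ (q + 1)) (↑(q + 1) * γ₂ t ^ q * deriv γ₂ t) t := by
        have h := ((hasDerivAt_pow (q + 1) (γ₂ t)).hasFDerivAt.restrictScalars
          ℝ).comp_hasDerivAt t hf2
        convert h using 1
        · rfl
        · rfl
        change _ = deriv γ₂ t • (↑(q + 1) * γ₂ t ^ (q + 1 - 1))
        simp [mul_comm]
      exact h1.mul h2
    set D : ℂ := (↑(p + 1) * γ₁ t ^ p * deriv γ₁ t) * γ₂ t ^ (q + 1)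
          + γ₁ t ^ (p + 1) * (↑(q + 1) * γ₂ t ^ q * deriv γ₂ t) with hD
    have hDval : D = Complex.I *
        ((((p + 1 : ℕ) : ℝ) * Complex.normSq (γ₁ t) ^ p * Complex.normSq (γ₂ t) ^ (q + 1)
          - ((q + 1 : ℕ) : ℝ) * Complex.normSq (γ₁ t) ^ (p + 1) * Complex.normSq (γ₂ t) ^ q : ℝ)
          : ℂ) := by
      rw [hD, ha', hb']
      push_cast
      rw [← Complex.mul_conj (γ₁ t), ← Complex.mul_conj (γ₂ t)]
      ring
    have hDre : D.re = 0 := by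
      rw [hDval]
      simp only [Complex.mul_re, Complex.I_re, Complex.I_im, Complex.ofReal_re,
        Complex.ofReal_im]
      ring
    have hG : HasDerivAt g (Complex.reCLM (D)) t :=
      Complex.reCLM.hasFDerivAt.comp_hasDerivAt t hF
    simpa [hDre] using hG
  intro t ht
  have hconv : Convex ℝ I' := convex_iff_ordConnected.mpr hIconn
  have hdiff : DifferentiableOn ℝ g I' := fun x hx => ((key x hx).differentiableAt).differentiableWithinAt
  have hfd : ∀ x ∈ I', fderivWithin ℝ g I' x = 0 := by
    intro x hx
    rw [fderivWithin_of_isOpen hIopen hx, (key x hx).hasFDerivAt.fderiv]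
    ext y; simp
  have := hconv.is_const_of_fderivWithin_eq_zero hdiff hfd ht hI0
  rw [hg] at this
  simp only [g] at this ⊢
  rw [this, hγinit₁, hγinit₂, ← Complex.ofReal_pow, ← Complex.ofReal_pow,
    ← Complex.ofReal_mul, Complex.ofReal_re]
end

section
/- Let γ = (γ₁, γ₂) : I' → ℂ² be a curve of type (6) with initial condition γ(0) = (b₁, b₂), where the interval I' is symmetric about 0 (i.e., −t ∈ I' whenever t ∈ I'). Then conj(γ_j(t)) = γ_j(−t) for j = 1, 2 and all t ∈ I'. -/
open Set Metric

/-- The autonomous vector field. -/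
noncomputable def vfield (p q : ℕ) (z : ℂ × ℂ) : ℂ × ℂ :=
  (Complex.I * ((starRingEnd ℂ) z.1) ^ p * ((starRingEnd ℂ) z.2) ^ (q + 1),
   -(Complex.I * ((starRingEnd ℂ) z.1) ^ (p + 1) * ((starRingEnd ℂ) z.2) ^ q))

lemma vfield_contDiff (p q : ℕ) : ContDiff ℝ 1 (vfield p q) := by
  have hconj : ContDiff ℝ 1 (fun z : ℂ => (starRingEnd ℂ) z) :=
    Complex.conjCLE.toContinuousLinearMap.contDiff
  have h1 : ContDiff ℝ 1 (fun z : ℂ × ℂ => (starRingEnd ℂ) z.1) := hconj.comp contDiff_fst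
  have h2 : ContDiff ℝ 1 (fun z : ℂ × ℂ => (starRingEnd ℂ) z.2) := hconj.comp contDiff_snd
  exact ((contDiff_const.mul (h1.pow p)).mul (h2.pow (q+1))).prodMk
    (((contDiff_const.mul (h1.pow (p+1))).mul (h2.pow q)).neg)

/-- `vfield` is Lipschitz on closed balls. -/
lemma vfield_lipschitz (p q : ℕ) (R : ℝ) :
    ∃ K : NNReal, LipschitzOnWith K (vfield p q) (closedBall (0 : ℂ × ℂ) R) := by
  have hC : ContinuousOn (fun z => fderiv ℝ (vfield p q) z) (closedBall (0 : ℂ × ℂ) R) :=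
    ((vfield_contDiff p q).continuous_fderiv one_ne_zero).continuousOn
  obtain ⟨C, hC⟩ := (isCompact_closedBall (0 : ℂ × ℂ) R).exists_bound_of_continuousOn hC
  refine ⟨C.toNNReal, (convex_closedBall _ _).lipschitzOnWith_of_nnnorm_fderiv_le
    (fun x _ => ((vfield_contDiff p q).differentiable one_ne_zero).differentiableAt) ?_⟩
  intro x hx
  have := hC x hx
  rw [← norm_toNNReal]
  exact Real.toNNReal_mono this

/-- on a symmetric interval, `conj (γ_j t) = γ_j (−t)`. -/
theorem stmt_7 (p q : ℕ) (b₁ b₂ : ℝ) (hb₁ : 0 < b₁) (hb₂ : 0 < b₂)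
    (I' : Set ℝ) (hIopen : IsOpen I') (hIconn : I'.OrdConnected) (hI0 : (0 : ℝ) ∈ I')
    (γ₁ γ₂ : ℝ → ℂ)
    (hγne : ∀ t ∈ I', γ₁ t ≠ 0 ∧ γ₂ t ≠ 0)
    (hγdiff : ∀ t ∈ I', DifferentiableAt ℝ γ₁ t ∧ DifferentiableAt ℝ γ₂ t)
    (hγode₁ : ∀ t ∈ I', deriv γ₁ t * (starRingEnd ℂ) (γ₁ t) =
      Complex.I * ((starRingEnd ℂ) (γ₁ t)) ^ (p + 1) * ((starRingEnd ℂ) (γ₂ t)) ^ (q + 1))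
    (hγode₂ : ∀ t ∈ I', deriv γ₂ t * (starRingEnd ℂ) (γ₂ t) =
      -(Complex.I * ((starRingEnd ℂ) (γ₁ t)) ^ (p + 1) * ((starRingEnd ℂ) (γ₂ t)) ^ (q + 1)))
    (hγinit₁ : γ₁ 0 = (b₁ : ℂ)) (hγinit₂ : γ₂ 0 = (b₂ : ℂ))
    (hsym : ∀ t ∈ I', -t ∈ I') :
    ∀ t ∈ I', (starRingEnd ℂ) (γ₁ t) = γ₁ (-t) ∧ (starRingEnd ℂ) (γ₂ t) = γ₂ (-t) := by
  set Γ : ℝ → ℂ × ℂ := fun t => (γ₁ t, γ₂ t) with hΓ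
  set Δ : ℝ → ℂ × ℂ := fun t => ((starRingEnd ℂ) (γ₁ (-t)), (starRingEnd ℂ) (γ₂ (-t))) with hΔ
  -- explicit derivative values
  have hd1 : ∀ t ∈ I', deriv γ₁ t =
      Complex.I * ((starRingEnd ℂ) (γ₁ t)) ^ p * ((starRingEnd ℂ) (γ₂ t)) ^ (q + 1) := by
    intro t ht
    have hne : (starRingEnd ℂ) (γ₁ t) ≠ 0 := by
      simpa using (hγne t ht).1
    apply mul_right_cancel₀ hne
    rw [hγode₁ t ht]; ring
  have hd2 : ∀ t ∈ I', deriv γ₂ t =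
      -(Complex.I * ((starRingEnd ℂ) (γ₁ t)) ^ (p + 1) * ((starRingEnd ℂ) (γ₂ t)) ^ q) := by
    intro t ht
    have hne : (starRingEnd ℂ) (γ₂ t) ≠ 0 := by
      simpa using (hγne t ht).2
    apply mul_right_cancel₀ hne
    rw [hγode₂ t ht]; ring
  -- Γ solves the ODE
  have hΓd : ∀ t ∈ I', HasDerivAt Γ (vfield p q (Γ t)) t := by
    intro t ht
    have h1 : HasDerivAt γ₁ (deriv γ₁ t) t := (hγdiff t ht).1.hasDerivAt
    have h2 : HasDerivAt γ₂ (deriv γ₂ t) t := (hγdiff t ht).2.hasDerivAt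
    rw [hd1 t ht] at h1; rw [hd2 t ht] at h2
    exact h1.prodMk h2
  -- Δ solves the same ODE
  have hΔd : ∀ t ∈ I', HasDerivAt Δ (vfield p q (Δ t)) t := by
    intro t ht
    have hnt : -t ∈ I' := hsym t ht
    have h1 : HasDerivAt γ₁ (deriv γ₁ (-t)) (-t) := (hγdiff _ hnt).1.hasDerivAt
    have h2 : HasDerivAt γ₂ (deriv γ₂ (-t)) (-t) := (hγdiff _ hnt).2.hasDerivAt
    have hneg : HasDerivAt (fun s : ℝ => -s) (-1 : ℝ) t := by
      simpa using (hasDerivAt_neg t)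
    have h1' : HasDerivAt (fun s => γ₁ (-s)) ((-1 : ℝ) • deriv γ₁ (-t)) t :=
      h1.scomp t hneg
    have h2' : HasDerivAt (fun s => γ₂ (-s)) ((-1 : ℝ) • deriv γ₂ (-t)) t :=
      h2.scomp t hneg
    have hc1 : HasDerivAt (fun s => (starRingEnd ℂ) (γ₁ (-s)))
        (Complex.conjCLE.toContinuousLinearMap ((-1 : ℝ) • deriv γ₁ (-t))) t :=
      Complex.conjCLE.toContinuousLinearMap.hasFDerivAt.comp_hasDerivAt t h1'
    have hc2 : HasDerivAt (fun s => (starRingEnd ℂ) (γ₂ (-s)))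
        (Complex.conjCLE.toContinuousLinearMap ((-1 : ℝ) • deriv γ₂ (-t))) t :=
      Complex.conjCLE.toContinuousLinearMap.hasFDerivAt.comp_hasDerivAt t h2'
    have := hc1.prodMk hc2
    convert this using 1
    have e1 : Complex.conjCLE.toContinuousLinearMap ((-1 : ℝ) • deriv γ₁ (-t))
        = -(starRingEnd ℂ) (deriv γ₁ (-t)) := by
      simp [Complex.conjCLE]
    have e2 : Complex.conjCLE.toContinuousLinearMap ((-1 : ℝ) • deriv γ₂ (-t))
        = -(starRingEnd ℂ) (deriv γ₂ (-t)) := by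
      simp [Complex.conjCLE]
    rw [e1, e2, hd1 _ (hsym t ht), hd2 _ (hsym t ht)]
    simp only [vfield, hΔ, map_mul, map_pow, map_neg, Complex.conj_conj, Complex.conj_I]
    simp only [Prod.mk.injEq]
    constructor <;> ring
  -- initial condition
  have hinit : Γ 0 = Δ 0 := by
    simp [hΓ, hΔ, hγinit₁, hγinit₂, Complex.conj_ofReal]
  -- main argument
  intro t ht
  -- find b with Icc (-b) b ⊆ I' and |t| < b
  have hu : |t| ∈ I' := by
    rcases abs_cases t with ⟨h, _⟩ | ⟨h, _⟩
    · rwa [h]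
    · rw [h]; exact hsym t ht
  obtain ⟨ε, hε, hball⟩ := Metric.isOpen_iff.mp hIopen _ hu
  set b := |t| + ε / 2 with hb
  have hbI : b ∈ I' := by
    apply hball
    rw [mem_ball, Real.dist_eq]
    have h' : b - |t| = ε / 2 := by rw [hb]; ring
    rw [h', abs_of_pos (by linarith)]
    linarith
  have hbneg : -b ∈ I' := hsym _ hbI
  have hsub : Icc (-b) b ⊆ I' := hIconn.out hbneg hbI
  have htIoo : t ∈ Ioo (-b) b := by
    constructor
    · have := neg_abs_le t; simp only [hb]; linarith
    · have := le_abs_self t; simp only [hb]; linarith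
  have h0Ioo : (0 : ℝ) ∈ Ioo (-b) b := by
    have : (0:ℝ) ≤ |t| := abs_nonneg t
    constructor <;> simp [hb] <;> linarith
  -- a bound on Γ over Icc (-b) b
  have hΓcont : ContinuousOn Γ (Icc (-b) b) := by
    intro x hx
    exact (((hγdiff x (hsub hx)).1.continuousAt).prodMk
      ((hγdiff x (hsub hx)).2.continuousAt)).continuousWithinAt
  obtain ⟨R, hR⟩ := (isCompact_Icc (a := -b) (b := b)).exists_bound_of_continuousOn hΓcont
  have hΔnorm : ∀ x, ‖Δ x‖ = ‖Γ (-x)‖ := by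
    intro x
    simp [hΔ, hΓ, Prod.norm_def]
  obtain ⟨K, hK⟩ := vfield_lipschitz p q R
  have heqon : EqOn Γ Δ (Ioo (-b) b) := by
    apply ODE_solution_unique_of_mem_Ioo (v := fun _ => vfield p q)
      (s := fun _ => closedBall (0 : ℂ × ℂ) R) (fun _ _ => hK) h0Ioo ?_ ?_ hinit
    · intro x hx
      refine ⟨hΓd x (hsub (Ioo_subset_Icc_self hx)), ?_⟩
      rw [mem_closedBall_zero_iff]
      exact hR x (Ioo_subset_Icc_self hx)
    · intro x hx
      refine ⟨hΔd x (hsub (Ioo_subset_Icc_self hx)), ?_⟩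
      rw [mem_closedBall_zero_iff, hΔnorm]
      have : -x ∈ Icc (-b) b := by
        rcases Ioo_subset_Icc_self hx with ⟨h1, h2⟩
        constructor <;> linarith
      exact hR _ this
  have h := heqon htIoo
  have h1 : γ₁ t = (starRingEnd ℂ) (γ₁ (-t)) := congrArg Prod.fst h
  have h2 : γ₂ t = (starRingEnd ℂ) (γ₂ (-t)) := congrArg Prod.snd h
  constructor
  · rw [h1, Complex.conj_conj]
  · rw [h2, Complex.conj_conj]
end

section
/- Let γ = (γ₁, γ₂) : I' → ℂ² be a curve of type (6) with initial condition γ(0) = (b₁, b₂), let n = p + q + 2, and suppose ν : I' → (0, π/2) is a differentiable function with |γ₁(t)| = √(b₁² + b₂²)·cos(ν(t)) and |γ₂(t)| = √(b₁² + b₂²)·sin(ν(t)) for all t ∈ I'. Then for all t ∈ I': (b₁² + b₂²)²·sin²(ν(t))·cos²(ν(t))·ν'(t)² = (b₁² + b₂²)ⁿ·cos(ν(t))^{2(p+1)}·sin(ν(t))^{2(q+1)} − b₁^{2(p+1)}·b₂^{2(q+1)}. -/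
private lemma my_pow_hasDerivAt (g : ℝ → ℂ) (g' : ℂ) (n : ℕ) (s : ℝ) (h : HasDerivAt g g' s) :
    HasDerivAt (fun u => g u ^ n) ((n : ℂ) * g s ^ (n - 1) * g') s := by
  have h2 := ((hasDerivAt_pow n (g s)).hasFDerivAt.restrictScalars ℝ)
  have h3 := h2.comp_hasDerivAt s h
  simpa [mul_comm, Function.comp_def] using h3

/-- the o.d.e. satisfied by the angle function `ν` of a curve of type (6). -/
theorem stmt_9 (p q : ℕ) (b₁ b₂ : ℝ) (hb₁ : 0 < b₁) (hb₂ : 0 < b₂)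
    (I' : Set ℝ) (hIopen : IsOpen I') (hIconn : I'.OrdConnected) (hI0 : (0 : ℝ) ∈ I')
    (γ₁ γ₂ : ℝ → ℂ)
    (hγne : ∀ t ∈ I', γ₁ t ≠ 0 ∧ γ₂ t ≠ 0)
    (hγdiff : ∀ t ∈ I', DifferentiableAt ℝ γ₁ t ∧ DifferentiableAt ℝ γ₂ t)
    (hγode₁ : ∀ t ∈ I', deriv γ₁ t * (starRingEnd ℂ) (γ₁ t) =
      Complex.I * ((starRingEnd ℂ) (γ₁ t)) ^ (p + 1) * ((starRingEnd ℂ) (γ₂ t)) ^ (q + 1))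
    (hγode₂ : ∀ t ∈ I', deriv γ₂ t * (starRingEnd ℂ) (γ₂ t) =
      -(Complex.I * ((starRingEnd ℂ) (γ₁ t)) ^ (p + 1) * ((starRingEnd ℂ) (γ₂ t)) ^ (q + 1)))
    (hγinit₁ : γ₁ 0 = (b₁ : ℂ)) (hγinit₂ : γ₂ 0 = (b₂ : ℂ))
    (ν : ℝ → ℝ)
    (hν : ∀ t ∈ I', ν t ∈ Set.Ioo (0 : ℝ) (Real.pi / 2))
    (hνdiff : ∀ t ∈ I', DifferentiableAt ℝ ν t)
    (hν₁ : ∀ t ∈ I', ‖γ₁ t‖ = Real.sqrt (b₁ ^ 2 + b₂ ^ 2) * Real.cos (ν t))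
    (hν₂ : ∀ t ∈ I', ‖γ₂ t‖ = Real.sqrt (b₁ ^ 2 + b₂ ^ 2) * Real.sin (ν t)) :
    ∀ t ∈ I',
      (b₁ ^ 2 + b₂ ^ 2) ^ 2 * Real.sin (ν t) ^ 2 * Real.cos (ν t) ^ 2 * deriv ν t ^ 2 =
        (b₁ ^ 2 + b₂ ^ 2) ^ (p + q + 2) * Real.cos (ν t) ^ (2 * (p + 1)) *
          Real.sin (ν t) ^ (2 * (q + 1)) - b₁ ^ (2 * (p + 1)) * b₂ ^ (2 * (q + 1)) := by
  set r2 : ℝ := b₁ ^ 2 + b₂ ^ 2 with hr2def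
  have hr2pos : (0 : ℝ) < r2 := by positivity
  have hconv : Convex ℝ I' := convex_iff_ordConnected.mpr hIconn
  set f : ℝ → ℂ := fun s => γ₁ s ^ (p + 1) * γ₂ s ^ (q + 1) with hfdef
  -- derivative of f
  have hfD : ∀ s ∈ I', HasDerivAt f
      ((↑(p + 1) * γ₁ s ^ p * deriv γ₁ s) * γ₂ s ^ (q + 1)
        + γ₁ s ^ (p + 1) * (↑(q + 1) * γ₂ s ^ q * deriv γ₂ s)) s := by
    intro s hs
    have h1 := my_pow_hasDerivAt γ₁ (deriv γ₁ s) (p + 1) s (hγdiff s hs).1.hasDerivAt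
    have h2 := my_pow_hasDerivAt γ₂ (deriv γ₂ s) (q + 1) s (hγdiff s hs).2.hasDerivAt
    simpa using h1.fun_mul h2
  -- the derivative of f is purely imaginary
  have hfderiv : ∀ s ∈ I', deriv f s = Complex.I *
      ((((p : ℝ) + 1) * Complex.normSq (γ₁ s) ^ p * Complex.normSq (γ₂ s) ^ (q + 1)
        - ((q : ℝ) + 1) * Complex.normSq (γ₁ s) ^ (p + 1) * Complex.normSq (γ₂ s) ^ q : ℝ) : ℂ) := by
    intro s hs
    have hne := hγne s hs
    have hc1 : (starRingEnd ℂ) (γ₁ s) ≠ 0 := by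
      simpa using hne.1
    have hc2 : (starRingEnd ℂ) (γ₂ s) ≠ 0 := by
      simpa using hne.2
    apply mul_right_cancel₀ (mul_ne_zero hc1 hc2)
    rw [(hfD s hs).deriv]
    have e1 := hγode₁ s hs
    have e2 := hγode₂ s hs
    have m1 : (γ₁ s : ℂ) * (starRingEnd ℂ) (γ₁ s) = ((Complex.normSq (γ₁ s) : ℝ) : ℂ) :=
      Complex.mul_conj _
    have m2 : (γ₂ s : ℂ) * (starRingEnd ℂ) (γ₂ s) = ((Complex.normSq (γ₂ s) : ℝ) : ℂ) :=
      Complex.mul_conj _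
    have m1p : ((Complex.normSq (γ₁ s) : ℝ) : ℂ) ^ p = γ₁ s ^ p * (starRingEnd ℂ) (γ₁ s) ^ p := by
      rw [← mul_pow, m1]
    have m1p1 : ((Complex.normSq (γ₁ s) : ℝ) : ℂ) ^ (p + 1)
        = γ₁ s ^ (p + 1) * (starRingEnd ℂ) (γ₁ s) ^ (p + 1) := by rw [← mul_pow, m1]
    have m2q : ((Complex.normSq (γ₂ s) : ℝ) : ℂ) ^ q = γ₂ s ^ q * (starRingEnd ℂ) (γ₂ s) ^ q := by
      rw [← mul_pow, m2]
    have m2q1 : ((Complex.normSq (γ₂ s) : ℝ) : ℂ) ^ (q + 1)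
        = γ₂ s ^ (q + 1) * (starRingEnd ℂ) (γ₂ s) ^ (q + 1) := by rw [← mul_pow, m2]
    push_cast
    rw [m1p, m1p1, m2q, m2q1]
    linear_combination ((p : ℂ) + 1) * γ₁ s ^ p * γ₂ s ^ (q + 1) * (starRingEnd ℂ) (γ₂ s) * e1
      + ((q : ℂ) + 1) * γ₁ s ^ (p + 1) * γ₂ s ^ q * (starRingEnd ℂ) (γ₁ s) * e2
  -- hence Re ∘ f has zero derivative, so it is constant
  have hgD : ∀ s ∈ I', HasDerivAt (fun u => (f u).re) 0 s := by
    intro s hs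
    have hF : HasDerivAt f (deriv f s) s := ((hfD s hs).differentiableAt).hasDerivAt
    have hval : (deriv f s).re = 0 := by
      rw [hfderiv s hs, Complex.mul_re, Complex.I_re, Complex.I_im, Complex.ofReal_re,
        Complex.ofReal_im]
      ring
    have h4 := (Complex.reCLM.hasFDerivAt.comp_hasDerivAt s hF)
    simpa [Function.comp_def, hval] using h4
  have hre_const : ∀ s ∈ I', (f s).re = b₁ ^ (p + 1) * b₂ ^ (q + 1) := by
    intro s hs
    have h0 : (f s).re = (f 0).re := by
      apply hconv.is_const_of_fderivWithin_eq_zero (f := fun u => (f u).re)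
        (fun u hu => ((hgD u hu).differentiableAt).differentiableWithinAt) ?_ hs hI0
      intro u hu
      rw [fderivWithin_of_isOpen hIopen hu, (hgD u hu).hasFDerivAt.fderiv]
      ext
      simp
    rw [h0, hfdef]
    simp only [hγinit₁, hγinit₂]
    push_cast
    rw [← Complex.ofReal_pow, ← Complex.ofReal_pow, ← Complex.ofReal_mul, Complex.ofReal_re]
  -- norms in terms of ν
  have hns1 : ∀ s ∈ I', Complex.normSq (γ₁ s) = r2 * Real.cos (ν s) ^ 2 := by
    intro s hs
    rw [← Complex.sq_norm, hν₁ s hs, mul_pow, Real.sq_sqrt hr2pos.le]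
  have hns2 : ∀ s ∈ I', Complex.normSq (γ₂ s) = r2 * Real.sin (ν s) ^ 2 := by
    intro s hs
    rw [← Complex.sq_norm, hν₂ s hs, mul_pow, Real.sq_sqrt hr2pos.le]
  -- the imaginary part of f
  have him : ∀ s ∈ I', (f s).im = -(r2 * Real.cos (ν s) * Real.sin (ν s) * deriv ν s) := by
    intro s hs
    -- derivative of normSq ∘ γ₁ two ways
    have hA : HasDerivAt (fun u => Complex.normSq (γ₁ u))
        ((deriv γ₁ s * (starRingEnd ℂ) (γ₁ s) + γ₁ s * (starRingEnd ℂ) (deriv γ₁ s)).re) s := by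
      have h1 : HasDerivAt γ₁ (deriv γ₁ s) s := (hγdiff s hs).1.hasDerivAt
      have h2 : HasDerivAt (fun u => (starRingEnd ℂ) (γ₁ u)) ((starRingEnd ℂ) (deriv γ₁ s)) s :=
        h1.star
      have h3 := h1.mul h2
      have h4 := Complex.reCLM.hasFDerivAt.comp_hasDerivAt s h3
      have heq : (fun u => Complex.normSq (γ₁ u)) = fun u => (γ₁ u * (starRingEnd ℂ) (γ₁ u)).re := by
        funext u
        rw [Complex.mul_conj, Complex.ofReal_re]
      rw [heq]
      exact h4
    have hB : HasDerivAt (fun u => r2 * (Real.cos (ν u) * Real.cos (ν u)))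
        (r2 * ((-Real.sin (ν s) * deriv ν s) * Real.cos (ν s)
          + Real.cos (ν s) * (-Real.sin (ν s) * deriv ν s))) s := by
      have h1 : HasDerivAt ν (deriv ν s) s := (hνdiff s hs).hasDerivAt
      have h2 : HasDerivAt (fun u => Real.cos (ν u)) (-Real.sin (ν s) * deriv ν s) s :=
        (Real.hasDerivAt_cos (ν s)).comp s h1
      exact (h2.mul h2).const_mul r2
    have hderiv_eq : (deriv γ₁ s * (starRingEnd ℂ) (γ₁ s) + γ₁ s * (starRingEnd ℂ) (deriv γ₁ s)).re
        = r2 * ((-Real.sin (ν s) * deriv ν s) * Real.cos (ν s)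
          + Real.cos (ν s) * (-Real.sin (ν s) * deriv ν s)) := by
      have heq : (fun u => Complex.normSq (γ₁ u))
          =ᶠ[nhds s] fun u => r2 * (Real.cos (ν u) * Real.cos (ν u)) := by
        filter_upwards [hIopen.mem_nhds hs] with u hu
        rw [hns1 u hu]; ring
      rw [← hA.deriv, Filter.EventuallyEq.deriv_eq heq, hB.deriv]
    -- compute the left-hand side re using the ODE
    have e1 := hγode₁ s hs
    have hconjf : (starRingEnd ℂ) (γ₁ s) ^ (p + 1) * (starRingEnd ℂ) (γ₂ s) ^ (q + 1)
        = (starRingEnd ℂ) (f s) := by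
      rw [hfdef]; simp [map_mul, map_pow]
    have hre1 : (deriv γ₁ s * (starRingEnd ℂ) (γ₁ s) + γ₁ s * (starRingEnd ℂ) (deriv γ₁ s)).re
        = 2 * (f s).im := by
      have : deriv γ₁ s * (starRingEnd ℂ) (γ₁ s) = Complex.I * (starRingEnd ℂ) (f s) := by
        rw [e1, mul_assoc, hconjf]
      have h5 : γ₁ s * (starRingEnd ℂ) (deriv γ₁ s)
          = (starRingEnd ℂ) (deriv γ₁ s * (starRingEnd ℂ) (γ₁ s)) := by
        rw [map_mul, Complex.conj_conj, mul_comm]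
      rw [h5, this]
      simp [Complex.add_re, Complex.mul_re]
      ring
    have := hderiv_eq
    rw [hre1] at this
    linear_combination this / 2
  intro t ht
  have hIm := him t ht
  have hRe := hre_const t ht
  have hNS : Complex.normSq (f t) = (r2 * Real.cos (ν t) ^ 2) ^ (p + 1)
      * (r2 * Real.sin (ν t) ^ 2) ^ (q + 1) := by
    rw [hfdef]
    simp only [map_mul, map_pow, hns1 t ht, hns2 t ht]
  have hkey : (f t).im ^ 2 = Complex.normSq (f t) - (f t).re ^ 2 := by
    rw [Complex.normSq_apply]; ring
  rw [hIm, hRe, hNS] at hkey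
  have hsq : (r2 * Real.cos (ν t) ^ 2) ^ (p + 1) * (r2 * Real.sin (ν t) ^ 2) ^ (q + 1)
      = r2 ^ (p + q + 2) * Real.cos (ν t) ^ (2 * (p + 1)) * Real.sin (ν t) ^ (2 * (q + 1)) := by
    rw [mul_pow, mul_pow, ← pow_mul, ← pow_mul,
      show p + q + 2 = (p + 1) + (q + 1) by omega, pow_add]
    ring
  have hb : (b₁ ^ (p + 1) * b₂ ^ (q + 1)) ^ 2 = b₁ ^ (2 * (p + 1)) * b₂ ^ (2 * (q + 1)) := by
    rw [mul_pow, ← pow_mul, ← pow_mul, mul_comm (p+1) 2, mul_comm (q+1) 2]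
  rw [hsq, hb] at hkey
  calc r2 ^ 2 * Real.sin (ν t) ^ 2 * Real.cos (ν t) ^ 2 * deriv ν t ^ 2
      = (-(r2 * Real.cos (ν t) * Real.sin (ν t) * deriv ν t)) ^ 2 := by ring
    _ = r2 ^ (p + q + 2) * Real.cos (ν t) ^ (2 * (p + 1)) * Real.sin (ν t) ^ (2 * (q + 1))
        - b₁ ^ (2 * (p + 1)) * b₂ ^ (2 * (q + 1)) := hkey
end

section
/- Fix nonnegative integers p, q, set n = p + q + 2, and let b₁, b₂ > 0 be real numbers. Consider the function F : [0,1] → ℝ defined by F(x) = (b₁² + b₂²)ⁿ·x^{p+1}·(1−x)^{q+1} − b₁^{2(p+1)}·b₂^{2(q+1)}. Then F has exactly two zeros in the interval [0,1] if and only if nⁿ·b₁^{2(p+1)}·b₂^{2(q+1)} < (p+1)^{p+1}·(q+1)^{q+1}·(b₁² + b₂²)ⁿ. -/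
/-- `F(x) = (b₁²+b₂²)ⁿ x^(p+1) (1−x)^(q+1) − b₁^(2(p+1)) b₂^(2(q+1))` has exactly
two zeros in `[0,1]` iff `nⁿ b₁^(2(p+1)) b₂^(2(q+1)) < (p+1)^(p+1) (q+1)^(q+1) (b₁²+b₂²)ⁿ`. -/
theorem stmt_10 (p q : ℕ) (b₁ b₂ : ℝ) (hb₁ : 0 < b₁) (hb₂ : 0 < b₂) :
    {x : ℝ | x ∈ Set.Icc (0 : ℝ) 1 ∧
        (b₁ ^ 2 + b₂ ^ 2) ^ (p + q + 2) * x ^ (p + 1) * (1 - x) ^ (q + 1) -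
          b₁ ^ (2 * (p + 1)) * b₂ ^ (2 * (q + 1)) = 0}.encard = 2 ↔
      ((p + q + 2 : ℕ) : ℝ) ^ (p + q + 2) * b₁ ^ (2 * (p + 1)) * b₂ ^ (2 * (q + 1)) <
        ((p : ℝ) + 1) ^ (p + 1) * ((q : ℝ) + 1) ^ (q + 1) * (b₁ ^ 2 + b₂ ^ 2) ^ (p + q + 2) := by
  set n : ℕ := p + q + 2 with hn
  set S : ℝ := b₁ ^ 2 + b₂ ^ 2 with hS
  have hS0 : 0 < S := by positivity
  have hSn : 0 < S ^ n := by positivity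
  set K : ℝ := b₁ ^ (2 * (p + 1)) * b₂ ^ (2 * (q + 1)) with hK
  have hK0 : 0 < K := by positivity
  set g : ℝ → ℝ := fun x => x ^ (p + 1) * (1 - x) ^ (q + 1) with hg
  set c : ℝ := K / S ^ n with hc
  have hc0 : 0 < c := by positivity
  have hn0 : (0 : ℝ) < (n : ℝ) := by positivity
  have hnn : (0 : ℝ) < (n : ℝ) ^ n := by positivity
  set m : ℝ := ((p : ℝ) + 1) / n with hm
  have hm0 : 0 < m := by positivity
  have hm1 : m < 1 := by
    rw [hm, div_lt_one hn0]
    have : ((p : ℝ) + 1) < ((p : ℝ) + (q : ℝ) + 2) := by linarith [Nat.cast_nonneg (α := ℝ) q]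
    simpa [hn] using by push_cast; linarith
  have h1m : 1 - m = ((q : ℝ) + 1) / n := by
    rw [hm]
    field_simp
    push_cast [hn]
    ring
  have gcont : Continuous g := by
    exact (continuous_pow _).mul ((continuous_const.sub continuous_id).pow _)
  have hderiv : ∀ x : ℝ, HasDerivAt g
      ((x ^ p * (1 - x) ^ q) * (((p : ℝ) + 1) - (n : ℝ) * x)) x := by
    intro x
    have h1 : HasDerivAt (fun x : ℝ => x ^ (p + 1)) (((p : ℝ) + 1) * x ^ p) x := by
      simpa using hasDerivAt_pow (p + 1) x
    have h2 : HasDerivAt (fun x : ℝ => (1 - x) ^ (q + 1))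
        ((((q : ℝ) + 1) * (1 - x) ^ q) * (-1)) x := by
      have := (((hasDerivAt_id x).const_sub 1).fun_pow (q + 1))
      simpa using this
    have := h1.fun_mul h2
    refine this.congr_deriv ?_
    push_cast [hn]
    ring
  have mono : StrictMonoOn g (Set.Icc 0 m) := by
    apply strictMonoOn_of_deriv_pos (convex_Icc 0 m) gcont.continuousOn
    intro x hx
    rw [interior_Icc] at hx
    rw [(hderiv x).deriv]
    have hx1 : x < 1 := lt_trans hx.2 hm1
    have hfac : 0 < ((p : ℝ) + 1) - (n : ℝ) * x := by
      have := hx.2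
      rw [hm, lt_div_iff₀ hn0] at this
      linarith
    exact mul_pos (mul_pos (pow_pos hx.1 p) (pow_pos (by linarith) q)) hfac
  have anti : StrictAntiOn g (Set.Icc m 1) := by
    apply strictAntiOn_of_deriv_neg (convex_Icc m 1) gcont.continuousOn
    intro x hx
    rw [interior_Icc] at hx
    rw [(hderiv x).deriv]
    have hx0 : 0 < x := lt_trans hm0 hx.1
    have hfac : ((p : ℝ) + 1) - (n : ℝ) * x < 0 := by
      have := hx.1
      rw [hm, div_lt_iff₀ hn0] at this
      linarith
    exact mul_neg_of_pos_of_neg (mul_pos (pow_pos hx0 p) (pow_pos (by linarith [hx.2]) q)) hfac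
  have gmax : ∀ x ∈ Set.Icc (0 : ℝ) 1, g x ≤ g m := by
    intro x hx
    rcases le_total x m with h | h
    · exact mono.monotoneOn ⟨hx.1, h⟩ ⟨hm0.le, le_refl m⟩ h
    · exact anti.antitoneOn ⟨le_refl m, hm1.le⟩ ⟨h, hx.2⟩ h
  have gm_val : g m = ((p : ℝ) + 1) ^ (p + 1) * ((q : ℝ) + 1) ^ (q + 1) / (n : ℝ) ^ n := by
    rw [hg]
    simp only
    rw [h1m, hm, div_pow, div_pow, div_mul_div_comm, ← pow_add]
    congr 2
    omega
  -- the witness point t with g t = c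
  have htc : g (b₁ ^ 2 / S) = c := by
    have h1t : 1 - b₁ ^ 2 / S = b₂ ^ 2 / S := by
      rw [hS]
      field_simp
      ring
    rw [hg]
    simp only
    rw [h1t, div_pow, div_pow, hc, hK]
    rw [← pow_mul, ← pow_mul, div_mul_div_comm, ← pow_add]
    congr 2
    omega
  have ht01 : b₁ ^ 2 / S ∈ Set.Icc (0 : ℝ) 1 := by
    constructor
    · positivity
    · rw [div_le_one hS0]
      nlinarith
  have hcle : c ≤ g m := htc ▸ gmax _ ht01
  -- rewrite the zero set
  have hsetEq : {x : ℝ | x ∈ Set.Icc (0 : ℝ) 1 ∧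
      S ^ n * x ^ (p + 1) * (1 - x) ^ (q + 1) - K = 0}
      = {x : ℝ | x ∈ Set.Icc (0 : ℝ) 1 ∧ g x = c} := by
    ext x
    simp only [Set.mem_setOf_eq, and_congr_right_iff]
    intro hx
    rw [sub_eq_zero, hg, hc]
    constructor
    · intro h
      field_simp
      rw [← h]; ring
    · intro h
      field_simp at h
      rw [← h]; ring
  -- rewrite the RHS inequality
  have hineq : ((n : ℝ) ^ n * K < ((p : ℝ) + 1) ^ (p + 1) * ((q : ℝ) + 1) ^ (q + 1) * S ^ n)
      ↔ c < g m := by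
    rw [gm_val, hc, div_lt_div_iff₀ hSn hnn]
    constructor <;> intro h <;> nlinarith
  rw [hsetEq]
  rw [show (((p + q + 2 : ℕ) : ℝ) ^ (p + q + 2) * b₁ ^ (2 * (p + 1)) * b₂ ^ (2 * (q + 1)) <
      ((p : ℝ) + 1) ^ (p + 1) * ((q : ℝ) + 1) ^ (q + 1) * (b₁ ^ 2 + b₂ ^ 2) ^ (p + q + 2)) ↔
      ((n : ℝ) ^ n * K < ((p : ℝ) + 1) ^ (p + 1) * ((q : ℝ) + 1) ^ (q + 1) * S ^ n) from by
    rw [hK, hS, hn]; constructor <;> intro h <;> nlinarith]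
  rw [hineq]
  constructor
  · -- encard = 2 → c < g m
    intro h2
    by_contra hR
    push_neg at hR
    have hceq : c = g m := le_antisymm hcle hR
    have hsingle : {x : ℝ | x ∈ Set.Icc (0 : ℝ) 1 ∧ g x = c} = {m} := by
      ext x
      simp only [Set.mem_setOf_eq, Set.mem_singleton_iff]
      constructor
      · rintro ⟨hx, hgx⟩
        by_contra hne
        rcases lt_or_gt_of_ne hne with hlt | hgt
        · have := mono ⟨hx.1, hlt.le⟩ ⟨hm0.le, le_refl m⟩ hlt
          rw [hgx, hceq] at this
          exact lt_irrefl _ this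
        · have := anti ⟨le_refl m, hm1.le⟩ ⟨hgt.le, hx.2⟩ hgt
          rw [hgx, hceq] at this
          exact lt_irrefl _ this
      · rintro rfl
        exact ⟨⟨hm0.le, hm1.le⟩, hceq.symm⟩
    rw [hsingle, Set.encard_singleton] at h2
    exact absurd h2 (by decide)
  · -- c < g m → encard = 2
    intro hlt
    have g0 : g 0 = 0 := by simp [hg]
    have g1 : g 1 = 0 := by simp [hg]
    obtain ⟨a, ha, hga⟩ := intermediate_value_Icc hm0.le gcont.continuousOn
      (by rw [g0]; exact ⟨hc0.le, hlt.le⟩)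
    obtain ⟨b, hb, hgb⟩ := intermediate_value_Icc' hm1.le gcont.continuousOn
      (by rw [g1]; exact ⟨hc0.le, hlt.le⟩)
    have ham : a < m := by
      rcases ha.2.lt_or_eq with h | h
      · exact h
      · exfalso; rw [h] at hga; rw [hga] at hlt; exact lt_irrefl _ hlt
    have hbm : m < b := by
      rcases hb.1.lt_or_eq with h | h
      · exact h
      · exfalso; rw [← h] at hgb; rw [hgb] at hlt; exact lt_irrefl _ hlt
    have hsetab : {x : ℝ | x ∈ Set.Icc (0 : ℝ) 1 ∧ g x = c} = {a, b} := by
      ext x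
      simp only [Set.mem_setOf_eq, Set.mem_insert_iff, Set.mem_singleton_iff]
      constructor
      · rintro ⟨hx, hgx⟩
        rcases le_total x m with h | h
        · left
          exact mono.injOn ⟨hx.1, h⟩ ha (by rw [hgx, hga])
        · right
          exact anti.injOn ⟨h, hx.2⟩ hb (by rw [hgx, hgb])
      · rintro (rfl | rfl)
        · exact ⟨⟨ha.1, le_trans ha.2 hm1.le⟩, hga⟩
        · exact ⟨⟨le_trans hm0.le hb.1, hb.2⟩, hgb⟩
    rw [hsetab]
    exact Set.encard_pair (by linarith)
end

section
/- Let γ = (γ₁, γ₂) : ℝ → ℂ² be a curve of type (6) (defined on all of ℝ) with initial condition γ(0) = (b₁, b₂), and suppose the function t ↦ (|γ₁(t)|, |γ₂(t)|) is periodic with minimal period T > 0. Then γ is a periodic map (i.e., there exists P > 0 with γ(t + P) = γ(t) for all t ∈ ℝ) if and only if both numbers (b₁^{p+1}·b₂^{q+1}/(2π))·∫₀^T dt/|γ₁(t)|² and (b₁^{p+1}·b₂^{q+1}/(2π))·∫₀^T dt/|γ₂(t)|² are rational. -/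
open MeasureTheory intervalIntegral in
lemma ftc_cont {f : ℝ → ℝ} (hf : Continuous f) (t : ℝ) :
    HasDerivAt (fun u => ∫ s in (0:ℝ)..u, f s) (f t) t :=
  integral_hasDerivAt_right (hf.intervalIntegrable 0 t)
    (hf.stronglyMeasurableAtFilter volume (nhds t)) hf.continuousAt

lemma HasDerivAt.cpow_nat {z : ℝ → ℂ} {z' : ℂ} {t : ℝ} (h : HasDerivAt z z' t) (n : ℕ) :
    HasDerivAt (fun t => z t ^ n) ((n : ℂ) * z t ^ (n - 1) * z') t := by
  induction n with
  | zero =>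
    convert hasDerivAt_const t (1:ℂ) using 1
    · rfl
    · funext s; simp
    simp
  | succ n ih =>
    rcases Nat.eq_zero_or_pos n with rfl | hn
    · simpa using h
    · have h2 := ih.mul h
      have hfun : ((fun t => z t ^ n) * z) = fun t => z t ^ (n + 1) := by
        funext s; simp [pow_succ]
      rw [hfun] at h2
      convert h2 using 1
      · rfl
      obtain ⟨m, rfl⟩ := Nat.exists_eq_add_of_le hn
      have e2 : 1 + m - 1 = m := by omega
      rw [Nat.add_sub_cancel, e2]
      push_cast
      ring

open Complex in
lemma polar_formula (z : ℝ → ℂ) (a g : ℝ → ℝ) (ha : Continuous a) (hg : Continuous g)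
    (hode : ∀ t, HasDerivAt z (((a t : ℂ) + Complex.I * (g t : ℂ)) * z t) t)
    (b : ℝ) (hz0 : z 0 = (b : ℂ)) :
    ∀ t, z t = (b : ℂ) * Complex.exp ((↑(∫ s in (0:ℝ)..t, a s) : ℂ) +
      Complex.I * (↑(∫ s in (0:ℝ)..t, g s) : ℂ)) := by
  set u : ℝ → ℂ := fun t => (↑(∫ s in (0:ℝ)..t, a s) : ℂ) +
      Complex.I * (↑(∫ s in (0:ℝ)..t, g s) : ℂ) with hu
  have hu' : ∀ t, HasDerivAt u ((a t : ℂ) + Complex.I * (g t : ℂ)) t := by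
    intro t
    exact ((ftc_cont ha t).ofReal_comp).add (((ftc_cont hg t).ofReal_comp).const_mul Complex.I)
  have hG : ∀ t, HasDerivAt (fun t => z t * Complex.exp (-(u t))) 0 t := by
    intro t
    have hE : HasDerivAt (fun t => Complex.exp (-(u t)))
        (Complex.exp (-(u t)) * (-((a t : ℂ) + Complex.I * (g t : ℂ)))) t :=
      (hu' t).neg.cexp
    have := (hode t).mul hE
    convert this using 1
    · rfl
    · rfl
    ring
  have hconst : ∀ t, z t * Complex.exp (-(u t)) = (b:ℂ) := by
    intro t
    have := is_const_of_deriv_eq_zero (f := fun t => z t * Complex.exp (-(u t)))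
      (fun t => (hG t).differentiableAt) (fun t => (hG t).deriv) t 0
    simpa [hu, intervalIntegral.integral_same, hz0] using this
  intro t
  have h := hconst t
  have : z t * Complex.exp (-(u t)) * Complex.exp (u t) = (b:ℂ) * Complex.exp (u t) := by
    rw [h]
  rwa [mul_assoc, ← Complex.exp_add, neg_add_cancel, Complex.exp_zero, mul_one] at this


open MeasureTheory in
lemma per_integral_add {f : ℝ → ℝ} (hf : Continuous f) {S : ℝ}
    (hp : Function.Periodic f S) (t : ℝ) :
    (∫ s in (0:ℝ)..(t+S), f s) = (∫ s in (0:ℝ)..t, f s) + ∫ s in (0:ℝ)..S, f s := by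
  have := hp.intervalIntegral_add_eq_add 0 t (fun t₁ t₂ => hf.intervalIntegrable t₁ t₂)
  simpa using this

open MeasureTheory in
lemma per_integral_int_mul {f : ℝ → ℝ} (hf : Continuous f) {S : ℝ}
    (hp : Function.Periodic f S) (n : ℤ) :
    (∫ s in (0:ℝ)..((n:ℝ)*S), f s) = n * ∫ s in (0:ℝ)..S, f s := by
  have := hp.intervalIntegral_add_zsmul_eq n 0 (fun t₁ t₂ => hf.intervalIntegrable t₁ t₂)
  simpa [zsmul_eq_mul] using this

open intervalIntegral in
/-- a globally defined curve of type (6) whose radii are periodic with minimal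
period `T` is a periodic map iff the two normalized integrals are rational. -/
theorem stmt_11 (p q : ℕ) (b₁ b₂ : ℝ) (hb₁ : 0 < b₁) (hb₂ : 0 < b₂)
    (γ₁ γ₂ : ℝ → ℂ)
    (hγne : ∀ t : ℝ, γ₁ t ≠ 0 ∧ γ₂ t ≠ 0)
    (hγdiff : ∀ t : ℝ, DifferentiableAt ℝ γ₁ t ∧ DifferentiableAt ℝ γ₂ t)
    (hγode₁ : ∀ t : ℝ, deriv γ₁ t * (starRingEnd ℂ) (γ₁ t) =
      Complex.I * ((starRingEnd ℂ) (γ₁ t)) ^ (p + 1) * ((starRingEnd ℂ) (γ₂ t)) ^ (q + 1))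
    (hγode₂ : ∀ t : ℝ, deriv γ₂ t * (starRingEnd ℂ) (γ₂ t) =
      -(Complex.I * ((starRingEnd ℂ) (γ₁ t)) ^ (p + 1) * ((starRingEnd ℂ) (γ₂ t)) ^ (q + 1)))
    (hγinit₁ : γ₁ 0 = (b₁ : ℂ)) (hγinit₂ : γ₂ 0 = (b₂ : ℂ))
    (T : ℝ) (hT : 0 < T)
    (hper : Function.Periodic (fun t => (‖γ₁ t‖, ‖γ₂ t‖)) T)
    (hmin : ∀ T' : ℝ, 0 < T' →
      Function.Periodic (fun t => (‖γ₁ t‖, ‖γ₂ t‖)) T' → T ≤ T') :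
    (∃ P : ℝ, 0 < P ∧ ∀ t : ℝ, γ₁ (t + P) = γ₁ t ∧ γ₂ (t + P) = γ₂ t) ↔
      ((∃ r : ℚ, (r : ℝ) = b₁ ^ (p + 1) * b₂ ^ (q + 1) / (2 * Real.pi) *
          ∫ t in (0 : ℝ)..T, 1 / ‖γ₁ t‖ ^ 2) ∧
        (∃ r : ℚ, (r : ℝ) = b₁ ^ (p + 1) * b₂ ^ (q + 1) / (2 * Real.pi) *
          ∫ t in (0 : ℝ)..T, 1 / ‖γ₂ t‖ ^ 2)) := by
  have hc₁ : ∀ t, (starRingEnd ℂ) (γ₁ t) ≠ 0 := fun t => by simpa using (hγne t).1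
  have hc₂ : ∀ t, (starRingEnd ℂ) (γ₂ t) ≠ 0 := fun t => by simpa using (hγne t).2
  have hns₁ : ∀ t, Complex.normSq (γ₁ t) ≠ 0 := fun t => by
    simpa [Complex.normSq_eq_zero] using (hγne t).1
  have hns₂ : ∀ t, Complex.normSq (γ₂ t) ≠ 0 := fun t => by
    simpa [Complex.normSq_eq_zero] using (hγne t).2
  -- explicit derivatives
  have hd₁ : ∀ t, HasDerivAt γ₁
      (Complex.I * ((starRingEnd ℂ) (γ₁ t)) ^ p * ((starRingEnd ℂ) (γ₂ t)) ^ (q + 1)) t := by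
    intro t
    have h := (hγdiff t).1.hasDerivAt
    have e : deriv γ₁ t = Complex.I * ((starRingEnd ℂ) (γ₁ t)) ^ p
        * ((starRingEnd ℂ) (γ₂ t)) ^ (q + 1) := by
      apply mul_right_cancel₀ (hc₁ t)
      rw [hγode₁ t]; ring
    rwa [e] at h
  have hd₂ : ∀ t, HasDerivAt γ₂
      (-(Complex.I * ((starRingEnd ℂ) (γ₁ t)) ^ (p + 1) * ((starRingEnd ℂ) (γ₂ t)) ^ q)) t := by
    intro t
    have h := (hγdiff t).2.hasDerivAt
    have e : deriv γ₂ t = -(Complex.I * ((starRingEnd ℂ) (γ₁ t)) ^ (p + 1)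
        * ((starRingEnd ℂ) (γ₂ t)) ^ q) := by
      apply mul_right_cancel₀ (hc₂ t)
      rw [hγode₂ t]; ring
    rwa [e] at h
  set F : ℝ → ℂ := fun t => γ₁ t ^ (p + 1) * γ₂ t ^ (q + 1) with hFdef
  have hF : ∀ t, HasDerivAt F
      (Complex.I * ((((p:ℝ)+1) * Complex.normSq (γ₁ t) ^ p * Complex.normSq (γ₂ t) ^ (q+1)
        - ((q:ℝ)+1) * Complex.normSq (γ₁ t) ^ (p+1) * Complex.normSq (γ₂ t) ^ q : ℝ) : ℂ)) t := by
    intro t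
    have h := (((hd₁ t).cpow_nat (p+1)).mul ((hd₂ t).cpow_nat (q+1)))
    convert h using 1
    · rfl
    · rfl
    have h1 : (Complex.normSq (γ₁ t) : ℂ) = γ₁ t * (starRingEnd ℂ) (γ₁ t) :=
      (Complex.mul_conj _).symm
    have h2 : (Complex.normSq (γ₂ t) : ℂ) = γ₂ t * (starRingEnd ℂ) (γ₂ t) :=
      (Complex.mul_conj _).symm
    push_cast
    rw [h1, h2]
    ring
  set K : ℝ := b₁ ^ (p+1) * b₂ ^ (q+1) with hKdef
  have hKpos : 0 < K := by positivity
  -- real part of F is constant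
  have hRe : ∀ t, (F t).re = K := by
    have hder : ∀ t, HasDerivAt (fun t => (F t).re) 0 t := by
      intro t
      obtain ⟨c, hc⟩ : ∃ c : ℝ, HasDerivAt F (Complex.I * (c:ℂ)) t := ⟨_, hF t⟩
      have h2 := (Complex.reCLM.hasFDerivAt.comp_hasDerivAt t hc)
      simpa [Function.comp_def] using h2
    intro t
    have := is_const_of_deriv_eq_zero (f := fun t => (F t).re)
      (fun t => (hder t).differentiableAt) (fun t => (hder t).deriv) t 0
    rw [this]
    show (γ₁ 0 ^ (p+1) * γ₂ 0 ^ (q+1)).re = _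
    rw [hγinit₁, hγinit₂, ← Complex.ofReal_pow, ← Complex.ofReal_pow, ← Complex.ofReal_mul,
      Complex.ofReal_re]
  -- continuity
  have hcont₁ : Continuous γ₁ := by
    rw [continuous_iff_continuousAt]; exact fun t => (hγdiff t).1.continuousAt
  have hcont₂ : Continuous γ₂ := by
    rw [continuous_iff_continuousAt]; exact fun t => (hγdiff t).2.continuousAt
  have hFcont : Continuous F := (hcont₁.pow _).mul (hcont₂.pow _)
  have hnsc₁ : Continuous fun t => Complex.normSq (γ₁ t) :=
    Complex.continuous_normSq.comp hcont₁
  have hnsc₂ : Continuous fun t => Complex.normSq (γ₂ t) :=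
    Complex.continuous_normSq.comp hcont₂
  set a₁ : ℝ → ℝ := fun t => (F t).im / Complex.normSq (γ₁ t) with ha₁def
  set a₂ : ℝ → ℝ := fun t => -(F t).im / Complex.normSq (γ₂ t) with ha₂def
  set g₁ : ℝ → ℝ := fun t => K / Complex.normSq (γ₁ t) with hg₁def
  set g₂ : ℝ → ℝ := fun t => -K / Complex.normSq (γ₂ t) with hg₂def
  have ha₁c : Continuous a₁ := (Complex.continuous_im.comp hFcont).div hnsc₁ hns₁
  have ha₂c : Continuous a₂ := (Complex.continuous_im.comp hFcont).neg.div hnsc₂ hns₂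
  have hg₁c : Continuous g₁ := continuous_const.div hnsc₁ hns₁
  have hg₂c : Continuous g₂ := continuous_const.div hnsc₂ hns₂
  have hconjF : ∀ t, (starRingEnd ℂ) (F t)
      = (starRingEnd ℂ) (γ₁ t) ^ (p+1) * (starRingEnd ℂ) (γ₂ t) ^ (q+1) := by
    intro t; simp [hFdef, map_mul, map_pow]
  have hsplit : ∀ t, Complex.I * (starRingEnd ℂ) (F t)
      = (((F t).im : ℂ)) + Complex.I * (((F t).re : ℂ)) := by
    intro t
    apply Complex.ext <;> simp [Complex.mul_re, Complex.mul_im]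
  -- ODE in polar-ready form for γ₁
  have hode₁ : ∀ t, HasDerivAt γ₁ (((a₁ t : ℂ) + Complex.I * (g₁ t : ℂ)) * γ₁ t) t := by
    intro t
    have h := hd₁ t
    have hnsC : (Complex.normSq (γ₁ t) : ℂ) ≠ 0 := by exact_mod_cast hns₁ t
    have e : ((a₁ t : ℂ) + Complex.I * (g₁ t : ℂ)) * γ₁ t
        = Complex.I * ((starRingEnd ℂ) (γ₁ t)) ^ p * ((starRingEnd ℂ) (γ₂ t)) ^ (q+1) := by
      apply mul_right_cancel₀ (hc₁ t)
      have lhs : ((a₁ t : ℂ) + Complex.I * (g₁ t : ℂ)) * γ₁ t * (starRingEnd ℂ) (γ₁ t)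
          = ((F t).im : ℂ) + Complex.I * ((F t).re : ℂ) := by
        rw [mul_assoc, Complex.mul_conj, hRe t]
        simp only [ha₁def, hg₁def]
        push_cast
        field_simp
      rw [lhs, ← hsplit t, hconjF t]
      ring
    rwa [← e] at h
  -- ODE in polar-ready form for γ₂
  have hode₂ : ∀ t, HasDerivAt γ₂ (((a₂ t : ℂ) + Complex.I * (g₂ t : ℂ)) * γ₂ t) t := by
    intro t
    have h := hd₂ t
    have hnsC : (Complex.normSq (γ₂ t) : ℂ) ≠ 0 := by exact_mod_cast hns₂ t
    have e : ((a₂ t : ℂ) + Complex.I * (g₂ t : ℂ)) * γ₂ t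
        = -(Complex.I * ((starRingEnd ℂ) (γ₁ t)) ^ (p+1) * ((starRingEnd ℂ) (γ₂ t)) ^ q) := by
      apply mul_right_cancel₀ (hc₂ t)
      have lhs : ((a₂ t : ℂ) + Complex.I * (g₂ t : ℂ)) * γ₂ t * (starRingEnd ℂ) (γ₂ t)
          = -(((F t).im : ℂ) + Complex.I * ((F t).re : ℂ)) := by
        rw [mul_assoc, Complex.mul_conj, hRe t]
        simp only [ha₂def, hg₂def]
        push_cast
        field_simp
        ring
      rw [lhs, ← hsplit t, hconjF t]
      ring
    rwa [← e] at h
  -- polar formulas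
  set Ψ₁ : ℝ → ℝ := fun t => ∫ s in (0:ℝ)..t, a₁ s with hΨ₁def
  set Φ₁ : ℝ → ℝ := fun t => ∫ s in (0:ℝ)..t, g₁ s with hΦ₁def
  set Ψ₂ : ℝ → ℝ := fun t => ∫ s in (0:ℝ)..t, a₂ s with hΨ₂def
  set Φ₂ : ℝ → ℝ := fun t => ∫ s in (0:ℝ)..t, g₂ s with hΦ₂def
  have hγeq₁ : ∀ t, γ₁ t = (b₁:ℂ) * Complex.exp ((Ψ₁ t : ℂ) + Complex.I * (Φ₁ t : ℂ)) :=
    polar_formula γ₁ a₁ g₁ ha₁c hg₁c hode₁ b₁ hγinit₁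
  have hγeq₂ : ∀ t, γ₂ t = (b₂:ℂ) * Complex.exp ((Ψ₂ t : ℂ) + Complex.I * (Φ₂ t : ℂ)) :=
    polar_formula γ₂ a₂ g₂ ha₂c hg₂c hode₂ b₂ hγinit₂
  have hre : ∀ x y : ℝ, ((x:ℂ) + Complex.I * (y:ℂ)).re = x := by
    intro x y; simp
  have habs₁ : ∀ t, ‖γ₁ t‖ = b₁ * Real.exp (Ψ₁ t) := by
    intro t
    rw [hγeq₁ t, norm_mul, Complex.norm_exp, hre, Complex.norm_of_nonneg hb₁.le]
  have habs₂ : ∀ t, ‖γ₂ t‖ = b₂ * Real.exp (Ψ₂ t) := by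
    intro t
    rw [hγeq₂ t, norm_mul, Complex.norm_exp, hre, Complex.norm_of_nonneg hb₂.le]
  have hper₁ : Function.Periodic (fun t => ‖γ₁ t‖) T :=
    fun t => congrArg Prod.fst (hper t)
  have hper₂ : Function.Periodic (fun t => ‖γ₂ t‖) T :=
    fun t => congrArg Prod.snd (hper t)
  have hg₁per : Function.Periodic g₁ T := by
    intro t
    have h1 : ‖γ₁ (t + T)‖ = ‖γ₁ t‖ := hper₁ t
    simp only [hg₁def]
    rw [Complex.normSq_eq_norm_sq, Complex.normSq_eq_norm_sq, h1]
  have hg₂per : Function.Periodic g₂ T := by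
    intro t
    have h1 : ‖γ₂ (t + T)‖ = ‖γ₂ t‖ := hper₂ t
    simp only [hg₂def]
    rw [Complex.normSq_eq_norm_sq, Complex.normSq_eq_norm_sq, h1]
  -- integral identities
  have hΦ₁T : Φ₁ T = K * ∫ t in (0:ℝ)..T, 1 / ‖γ₁ t‖ ^ 2 := by
    rw [hΦ₁def, ← intervalIntegral.integral_const_mul]
    apply intervalIntegral.integral_congr
    intro s _
    simp only [hg₁def]
    rw [Complex.normSq_eq_norm_sq, div_eq_mul_one_div]
  have hΦ₂T : Φ₂ T = -K * ∫ t in (0:ℝ)..T, 1 / ‖γ₂ t‖ ^ 2 := by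
    rw [hΦ₂def, ← intervalIntegral.integral_const_mul]
    apply intervalIntegral.integral_congr
    intro s _
    simp only [hg₂def]
    rw [Complex.normSq_eq_norm_sq, div_eq_mul_one_div]
  have hπ : Real.pi ≠ 0 := Real.pi_ne_zero
  constructor
  · -- forward direction
    rintro ⟨P, hP, hPer⟩
    have pairper : Function.Periodic (fun t => (‖γ₁ t‖, ‖γ₂ t‖)) P := by
      intro t; simp [(hPer t).1, (hPer t).2]
    obtain ⟨k, hk1, hkP⟩ : ∃ k : ℤ, 1 ≤ k ∧ P = (k:ℝ) * T := by
      set k := ⌊P / T⌋ with hkdef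
      have hkT : (k:ℝ) * T ≤ P := by
        have h1 : (k:ℝ) ≤ P / T := Int.floor_le (P / T)
        calc (k:ℝ) * T ≤ (P / T) * T := by nlinarith
          _ = P := by field_simp
      have hPk : P < ((k:ℝ)+1) * T := by
        have h1 : P / T < (k:ℝ) + 1 := by exact_mod_cast Int.lt_floor_add_one (P / T)
        calc P = (P / T) * T := by field_simp
          _ < ((k:ℝ)+1) * T := by nlinarith
      have hTP : T ≤ P := hmin P hP pairper
      have hk0 : 1 ≤ k := by
        by_contra hcon
        push_neg at hcon
        have hle : k ≤ 0 := by omega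
        have hcast : (k:ℝ) ≤ 0 := by exact_mod_cast hle
        nlinarith
      rcases eq_or_lt_of_le (sub_nonneg.mpr hkT) with heq | hlt
      · exact ⟨k, hk0, by linarith [heq]⟩
      · exfalso
        have hRper : Function.Periodic
            (fun t => (‖γ₁ t‖, ‖γ₂ t‖)) (P - (k:ℝ)*T) := by
          intro x
          have e : x + (P - (k:ℝ)*T) = (x - (k:ℝ)*T) + P := by ring
          have h2 : (‖γ₁ (x - (k:ℝ)*T + P)‖, ‖γ₂ (x - (k:ℝ)*T + P)‖)
              = (‖γ₁ (x - (k:ℝ)*T)‖, ‖γ₂ (x - (k:ℝ)*T)‖) := pairper _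
          have h3 : (‖γ₁ (x - (k:ℝ)*T + (k:ℝ)*T)‖,
                ‖γ₂ (x - (k:ℝ)*T + (k:ℝ)*T)‖)
              = (‖γ₁ (x - (k:ℝ)*T)‖, ‖γ₂ (x - (k:ℝ)*T)‖) :=
            (hper.int_mul k) _
          rw [sub_add_cancel] at h3
          show (‖γ₁ (x + (P - (k:ℝ)*T))‖, ‖γ₂ (x + (P - (k:ℝ)*T))‖)
              = (‖γ₁ x‖, ‖γ₂ x‖)
          rw [e, h2, ← h3]
        have := hmin _ hlt hRper
        linarith
    have hkne : ((k:ℝ)) ≠ 0 := by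
      have : (0:ℝ) < (k:ℝ) := by exact_mod_cast lt_of_lt_of_le zero_lt_one hk1
      exact ne_of_gt this
    have quant : ∀ (Φ : ℝ → ℝ) (Ψ : ℝ → ℝ) (b : ℝ), 0 < b →
        (∀ t, γ₁ t = γ₁ t) → (b:ℂ) * Complex.exp ((Ψ P : ℂ) + Complex.I * (Φ P : ℂ)) = (b:ℂ) →
        ∃ m : ℤ, Φ P = 2 * Real.pi * m := by
      intro Φ Ψ b hb _ h0
      have hbne : (b:ℂ) ≠ 0 := by exact_mod_cast ne_of_gt hb
      have hexp : Complex.exp ((Ψ P : ℂ) + Complex.I * (Φ P : ℂ)) = 1 :=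
        mul_left_cancel₀ hbne (h0.trans (mul_one _).symm)
      obtain ⟨m, hm⟩ := Complex.exp_eq_one_iff.mp hexp
      refine ⟨m, ?_⟩
      have him := congrArg Complex.im hm
      simp [Complex.add_im, Complex.mul_im, Complex.mul_re] at him
      linarith
    obtain ⟨m₁, hm₁⟩ : ∃ m : ℤ, Φ₁ P = 2 * Real.pi * m := by
      apply quant Φ₁ Ψ₁ b₁ hb₁ (fun t => rfl)
      have h0 : γ₁ (0 + P) = γ₁ 0 := (hPer 0).1
      rw [zero_add, hγeq₁ P, hγinit₁] at h0
      exact h0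
    obtain ⟨m₂, hm₂⟩ : ∃ m : ℤ, Φ₂ P = 2 * Real.pi * m := by
      apply quant Φ₂ Ψ₂ b₂ hb₂ (fun t => rfl)
      have h0 : γ₂ (0 + P) = γ₂ 0 := (hPer 0).2
      rw [zero_add, hγeq₂ P, hγinit₂] at h0
      exact h0
    have hΦ₁P : Φ₁ P = (k:ℝ) * Φ₁ T := by
      rw [hkP]; exact per_integral_int_mul hg₁c hg₁per k
    have hΦ₂P : Φ₂ P = (k:ℝ) * Φ₂ T := by
      rw [hkP]; exact per_integral_int_mul hg₂c hg₂per k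
    have hKne : K ≠ 0 := ne_of_gt hKpos
    constructor
    · refine ⟨(m₁:ℚ)/(k:ℚ), ?_⟩
      have hI₁ : ∫ t in (0:ℝ)..T, 1 / ‖γ₁ t‖ ^ 2 = Φ₁ T / K := by
        rw [hΦ₁T]; field_simp
      have hkey : (k:ℝ) * Φ₁ T = 2 * Real.pi * m₁ := by rw [← hΦ₁P, hm₁]
      rw [hI₁]
      push_cast
      field_simp
      linear_combination (-1 : ℝ) * hkey
    · refine ⟨-((m₂:ℚ)/(k:ℚ)), ?_⟩
      have hI₂ : ∫ t in (0:ℝ)..T, 1 / ‖γ₂ t‖ ^ 2 = -Φ₂ T / K := by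
        rw [hΦ₂T]; field_simp
      have hkey : (k:ℝ) * Φ₂ T = 2 * Real.pi * m₂ := by rw [← hΦ₂P, hm₂]
      rw [hI₂]
      push_cast
      field_simp
      linear_combination hkey
  · -- backward direction
    rintro ⟨⟨r₁, hr₁⟩, ⟨r₂, hr₂⟩⟩
    have hΦ₁T' : Φ₁ T = 2 * Real.pi * r₁ := by
      rw [hΦ₁T, hr₁]; field_simp
    have hΦ₂T' : Φ₂ T = -(2 * Real.pi * r₂) := by
      rw [hΦ₂T, hr₂]; field_simp
    set n : ℕ := r₁.den * r₂.den with hndef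
    have hn0 : 0 < n := Nat.mul_pos r₁.pos r₂.pos
    have hnR : (0:ℝ) < (n:ℝ) := by exact_mod_cast hn0
    have hm₁ : ((r₁.num * (r₂.den:ℤ) : ℤ) : ℝ) = (n:ℝ) * (r₁:ℝ) := by
      have hden : ((r₁.den:ℝ)) ≠ 0 := by
        have := r₁.pos
        positivity
      rw [hndef, Rat.cast_def]
      push_cast
      field_simp
    have hm₂ : ((-(r₂.num * (r₁.den:ℤ)) : ℤ) : ℝ) = (n:ℝ) * (-(r₂:ℝ)) := by
      have hden : ((r₂.den:ℝ)) ≠ 0 := by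
        have := r₂.pos
        positivity
      rw [hndef, Rat.cast_def]
      push_cast
      field_simp
    refine ⟨(n:ℝ) * T, by positivity, fun t => ⟨?_, ?_⟩⟩
    · -- γ₁ periodic
      have hperN : Function.Periodic (fun t => ‖γ₁ t‖) ((n:ℝ)*T) := hper₁.nat_mul n
      have hgperN : Function.Periodic g₁ ((n:ℝ)*T) := hg₁per.nat_mul n
      have hΨeq : Ψ₁ (t + (n:ℝ)*T) = Ψ₁ t := by
        have h1 : ‖γ₁ (t + (n:ℝ)*T)‖ = ‖γ₁ t‖ := hperN t
        rw [habs₁, habs₁] at h1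
        exact Real.exp_injective (mul_left_cancel₀ (ne_of_gt hb₁) h1)
      have hΦP : Φ₁ ((n:ℝ)*T) = 2*Real.pi*((r₁.num * (r₂.den:ℤ) : ℤ):ℝ) := by
        have h2 : Φ₁ ((n:ℝ)*T) = (n:ℝ) * Φ₁ T := by
          have := per_integral_int_mul hg₁c hg₁per (n:ℤ)
          simpa using this
        rw [h2, hΦ₁T', hm₁]
        ring
      have hΦeq : Φ₁ (t + (n:ℝ)*T) = Φ₁ t + 2*Real.pi*((r₁.num * (r₂.den:ℤ) : ℤ):ℝ) := by
        have h4 : Φ₁ (t + (n:ℝ)*T) = Φ₁ t + Φ₁ ((n:ℝ)*T) := per_integral_add hg₁c hgperN t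
        rw [h4, hΦP]
      rw [hγeq₁ (t + (n:ℝ)*T), hγeq₁ t, hΨeq, hΦeq]
      congr 1
      rw [show ((Ψ₁ t : ℂ) + Complex.I *
          ((Φ₁ t + 2*Real.pi*((r₁.num * (r₂.den:ℤ) : ℤ):ℝ) : ℝ) : ℂ))
          = ((Ψ₁ t : ℂ) + Complex.I * (Φ₁ t : ℂ))
            + ((r₁.num * (r₂.den:ℤ) : ℤ) : ℂ) * (2*(Real.pi:ℂ)*Complex.I) by push_cast; ring]
      rw [Complex.exp_add, Complex.exp_int_mul_two_pi_mul_I, mul_one]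
    · -- γ₂ periodic
      have hperN : Function.Periodic (fun t => ‖γ₂ t‖) ((n:ℝ)*T) := hper₂.nat_mul n
      have hgperN : Function.Periodic g₂ ((n:ℝ)*T) := hg₂per.nat_mul n
      have hΨeq : Ψ₂ (t + (n:ℝ)*T) = Ψ₂ t := by
        have h1 : ‖γ₂ (t + (n:ℝ)*T)‖ = ‖γ₂ t‖ := hperN t
        rw [habs₂, habs₂] at h1
        exact Real.exp_injective (mul_left_cancel₀ (ne_of_gt hb₂) h1)
      have hΦP : Φ₂ ((n:ℝ)*T) = 2*Real.pi*((-(r₂.num * (r₁.den:ℤ)) : ℤ):ℝ) := by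
        have h2 : Φ₂ ((n:ℝ)*T) = (n:ℝ) * Φ₂ T := by
          have := per_integral_int_mul hg₂c hg₂per (n:ℤ)
          simpa using this
        rw [h2, hΦ₂T', hm₂]
        ring
      have hΦeq : Φ₂ (t + (n:ℝ)*T) = Φ₂ t + 2*Real.pi*((-(r₂.num * (r₁.den:ℤ)) : ℤ):ℝ) := by
        have h4 : Φ₂ (t + (n:ℝ)*T) = Φ₂ t + Φ₂ ((n:ℝ)*T) := per_integral_add hg₂c hgperN t
        rw [h4, hΦP]
      rw [hγeq₂ (t + (n:ℝ)*T), hγeq₂ t, hΨeq, hΦeq]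
      congr 1
      rw [show ((Ψ₂ t : ℂ) + Complex.I *
          ((Φ₂ t + 2*Real.pi*((-(r₂.num * (r₁.den:ℤ)) : ℤ):ℝ) : ℝ) : ℂ))
          = ((Ψ₂ t : ℂ) + Complex.I * (Φ₂ t : ℂ))
            + ((-(r₂.num * (r₁.den:ℤ)) : ℤ) : ℂ) * (2*(Real.pi:ℂ)*Complex.I) by push_cast; ring]
      rw [Complex.exp_add, Complex.exp_int_mul_two_pi_mul_I, mul_one]
end

section
/- Fix nonnegative integers p, q and let λ > 0 be a real number with λ^{p+q} = (p+1)^p·(q+1)^q. Then the curve γ : ℝ → ℂ² defined by γ(t) = (√((p+1)/λ)·exp(i·√((q+1)/(p+1))·t), √((q+1)/λ)·exp(−i·√((p+1)/(q+1))·t)) is a curve of type (6) with initial condition γ(0) = (√((p+1)/λ), √((q+1)/λ)); that is, γ₁(t) ≠ 0, γ₂(t) ≠ 0, and γ_j'(t)·conj(γ_j(t)) = (−1)^{j−1}·i·conj(γ₁(t))^{p+1}·conj(γ₂(t))^{q+1} for j = 1, 2 and all t ∈ ℝ. -/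
/-- the explicit curve of Lemma 2.5 is a curve of type (6) with initial
condition `(√((p+1)/λ), √((q+1)/λ))`. -/
theorem stmt_12 (p q : ℕ) (l : ℝ) (hl : 0 < l) (hlpq : l ^ (p + q) = ((p : ℝ) + 1) ^ p * ((q : ℝ) + 1) ^ q)
    (γ₁ γ₂ : ℝ → ℂ)
    (hγ₁ : ∀ t : ℝ, γ₁ t = (Real.sqrt (((p : ℝ) + 1) / l) : ℂ) *
      Complex.exp (Complex.I * ((Real.sqrt (((q : ℝ) + 1) / ((p : ℝ) + 1)) : ℝ) : ℂ) * (t : ℂ)))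
    (hγ₂ : ∀ t : ℝ, γ₂ t = (Real.sqrt (((q : ℝ) + 1) / l) : ℂ) *
      Complex.exp (-(Complex.I * ((Real.sqrt (((p : ℝ) + 1) / ((q : ℝ) + 1)) : ℝ) : ℂ) * (t : ℂ)))) :
    γ₁ 0 = (Real.sqrt (((p : ℝ) + 1) / l) : ℂ) ∧ γ₂ 0 = (Real.sqrt (((q : ℝ) + 1) / l) : ℂ) ∧
    ∀ t : ℝ, γ₁ t ≠ 0 ∧ γ₂ t ≠ 0 ∧
      (deriv γ₁ t * (starRingEnd ℂ) (γ₁ t) =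
        Complex.I * ((starRingEnd ℂ) (γ₁ t)) ^ (p + 1) * ((starRingEnd ℂ) (γ₂ t)) ^ (q + 1)) ∧
      (deriv γ₂ t * (starRingEnd ℂ) (γ₂ t) =
        -(Complex.I * ((starRingEnd ℂ) (γ₁ t)) ^ (p + 1) * ((starRingEnd ℂ) (γ₂ t)) ^ (q + 1))) := by
  have hP : (0:ℝ) < (p:ℝ) + 1 := by positivity
  have hQ : (0:ℝ) < (q:ℝ) + 1 := by positivity
  set P : ℝ := (p:ℝ) + 1 with hPdef
  set Q : ℝ := (q:ℝ) + 1 with hQdef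
  set a : ℝ := Real.sqrt (P/l) with hadef
  set b : ℝ := Real.sqrt (Q/l) with hbdef
  set w₁ : ℝ := Real.sqrt (Q/P) with hw1def
  set w₂ : ℝ := Real.sqrt (P/Q) with hw2def
  have ha : 0 < a := Real.sqrt_pos.2 (by positivity)
  have hb : 0 < b := Real.sqrt_pos.2 (by positivity)
  have ha2 : a^2 = P/l := Real.sq_sqrt (by positivity)
  have hb2 : b^2 = Q/l := Real.sq_sqrt (by positivity)
  have hw1sq : w₁^2 = Q/P := Real.sq_sqrt (by positivity)
  have hw2sq : w₂^2 = P/Q := Real.sq_sqrt (by positivity)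
  have hw1 : 0 ≤ w₁ := Real.sqrt_nonneg _
  have hw2 : 0 ≤ w₂ := Real.sqrt_nonneg _
  -- key real identities
  have hk : P * w₁ = Q * w₂ := by
    have h1 : P * w₁ = Real.sqrt (P*Q) := by
      rw [show P * w₁ = Real.sqrt (P^2) * Real.sqrt (Q/P) from by rw [Real.sqrt_sq hP.le],
        ← Real.sqrt_mul (by positivity)]
      congr 1
      field_simp
    have h2 : Q * w₂ = Real.sqrt (P*Q) := by
      rw [show Q * w₂ = Real.sqrt (Q^2) * Real.sqrt (P/Q) from by rw [Real.sqrt_sq hQ.le],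
        ← Real.sqrt_mul (by positivity)]
      congr 1
      field_simp
    rw [h1, h2]
  have hmid : (P/l)^2 * (Q/P) = (P/l)^(p+1) * (Q/l)^(q+1) := by
    have hll : l^(p+(q+2)) = P^p * Q^q * l^2 := by
      rw [show p+(q+2) = (p+q)+2 from by ring, pow_add, hlpq]
    rw [div_pow P l (p+1), div_pow Q l (q+1), div_mul_div_comm, show l ^ (p + 1) * l ^ (q + 1) = l^(p+(q+2)) from by
      rw [← pow_add]; congr 1; omega, hll]
    rw [eq_div_iff (by positivity), div_pow, div_mul_div_comm, div_mul_eq_mul_div, div_eq_iff (by positivity)]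
    ring
  have hc1 : a^2 * w₁ = a^(p+1) * b^(q+1) := by
    have hsq : (a^2 * w₁)^2 = (a^(p+1) * b^(q+1))^2 := by
      calc (a^2*w₁)^2 = (a^2)^2 * w₁^2 := by ring
      _ = (P/l)^2 * (Q/P) := by rw [ha2, hw1sq]
      _ = (P/l)^(p+1) * (Q/l)^(q+1) := hmid
      _ = (a^2)^(p+1) * (b^2)^(q+1) := by rw [ha2, hb2]
      _ = (a^(p+1)*b^(q+1))^2 := by ring
    have hx : 0 ≤ a^2*w₁ := by positivity
    have hy : 0 ≤ a^(p+1)*b^(q+1) := by positivity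
    calc a^2*w₁ = Real.sqrt ((a^2*w₁)^2) := (Real.sqrt_sq hx).symm
    _ = Real.sqrt ((a^(p+1)*b^(q+1))^2) := by rw [hsq]
    _ = a^(p+1)*b^(q+1) := Real.sqrt_sq hy
  have hc2 : b^2 * w₂ = a^(p+1) * b^(q+1) := by
    have hsq : (b^2 * w₂)^2 = (a^(p+1) * b^(q+1))^2 := by
      calc (b^2*w₂)^2 = (b^2)^2 * w₂^2 := by ring
      _ = (P/l)^2 * (Q/P) := by rw [hb2, hw2sq]; field_simp
      _ = (P/l)^(p+1) * (Q/l)^(q+1) := hmid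
      _ = (a^2)^(p+1) * (b^2)^(q+1) := by rw [ha2, hb2]
      _ = (a^(p+1)*b^(q+1))^2 := by ring
    have hx : 0 ≤ b^2*w₂ := by positivity
    have hy : 0 ≤ a^(p+1)*b^(q+1) := by positivity
    calc b^2*w₂ = Real.sqrt ((b^2*w₂)^2) := (Real.sqrt_sq hx).symm
    _ = Real.sqrt ((a^(p+1)*b^(q+1))^2) := by rw [hsq]
    _ = a^(p+1)*b^(q+1) := Real.sqrt_sq hy
  -- complex versions
  have hkC : ((p:ℂ)+1) * (w₁:ℂ) = ((q:ℂ)+1) * (w₂:ℂ) := by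
    rw [hPdef, hQdef] at hk
    exact_mod_cast hk
  have hc1C : (a:ℂ)^2 * (w₁:ℂ) = (a:ℂ)^(p+1) * (b:ℂ)^(q+1) := by exact_mod_cast hc1
  have hc2C : (b:ℂ)^2 * (w₂:ℂ) = (a:ℂ)^(p+1) * (b:ℂ)^(q+1) := by exact_mod_cast hc2
  -- initial conditions
  have hγ₁0 : γ₁ 0 = (a:ℂ) := by rw [hγ₁ 0]; simp
  have hγ₂0 : γ₂ 0 = (b:ℂ) := by rw [hγ₂ 0]; simp
  refine ⟨hγ₁0, hγ₂0, fun t => ?_⟩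
  -- derivatives
  have h0 : HasDerivAt (fun s:ℝ => (s:ℂ)) 1 t := by
    simpa using (hasDerivAt_id t).ofReal_comp
  have hd1 : deriv γ₁ t = (a:ℂ) * (Complex.exp (Complex.I*(w₁:ℂ)*(t:ℂ)) * (Complex.I*(w₁:ℂ))) := by
    have h1 : HasDerivAt (fun s:ℝ => Complex.I*(w₁:ℂ)*(s:ℂ)) (Complex.I*(w₁:ℂ)) t := by
      simpa using h0.const_mul (Complex.I*(w₁:ℂ))
    have h2 := (Complex.hasDerivAt_exp (Complex.I*(w₁:ℂ)*(t:ℂ))).comp t h1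
    have h3 := h2.const_mul (a:ℂ)
    have hfun : γ₁ = fun s:ℝ => (a:ℂ) * Complex.exp (Complex.I*(w₁:ℂ)*(s:ℂ)) := funext hγ₁
    rw [hfun]
    exact h3.deriv
  have hd2 : deriv γ₂ t = (b:ℂ) * (Complex.exp (-(Complex.I*(w₂:ℂ)*(t:ℂ))) * (-(Complex.I*(w₂:ℂ)))) := by
    have h1 : HasDerivAt (fun s:ℝ => -(Complex.I*(w₂:ℂ)*(s:ℂ))) (-(Complex.I*(w₂:ℂ))) t := by
      have := h0.const_mul (Complex.I*(w₂:ℂ))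
      have h := this.neg
      exact h.congr_deriv (by ring)
    have h2 := (Complex.hasDerivAt_exp (-(Complex.I*(w₂:ℂ)*(t:ℂ)))).comp t h1
    have h3 := h2.const_mul (b:ℂ)
    have hfun : γ₂ = fun s:ℝ => (b:ℂ) * Complex.exp (-(Complex.I*(w₂:ℂ)*(s:ℂ))) := funext hγ₂
    rw [hfun]
    exact h3.deriv
  -- conjugates
  have hconj1 : (starRingEnd ℂ) ((a:ℂ) * Complex.exp (Complex.I*(w₁:ℂ)*(t:ℂ)))
      = (a:ℂ) * Complex.exp (-(Complex.I*(w₁:ℂ)*(t:ℂ))) := by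
    rw [map_mul, Complex.conj_ofReal, ← Complex.exp_conj]
    congr 1
    simp [Complex.conj_I]
  have hconj2 : (starRingEnd ℂ) ((b:ℂ) * Complex.exp (-(Complex.I*(w₂:ℂ)*(t:ℂ))))
      = (b:ℂ) * Complex.exp (Complex.I*(w₂:ℂ)*(t:ℂ)) := by
    rw [map_mul, Complex.conj_ofReal, ← Complex.exp_conj]
    congr 1
    simp [Complex.conj_I]
  have e1 : Complex.exp (Complex.I*(w₁:ℂ)*(t:ℂ)) * Complex.exp (-(Complex.I*(w₁:ℂ)*(t:ℂ))) = 1 := by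
    rw [← Complex.exp_add]; simp
  have e1' : Complex.exp (-(Complex.I*(w₂:ℂ)*(t:ℂ))) * Complex.exp (Complex.I*(w₂:ℂ)*(t:ℂ)) = 1 := by
    rw [← Complex.exp_add]; simp
  have e2 : Complex.exp (-(Complex.I*(w₁:ℂ)*(t:ℂ))) ^ (p+1) * Complex.exp (Complex.I*(w₂:ℂ)*(t:ℂ)) ^ (q+1) = 1 := by
    rw [← Complex.exp_nat_mul, ← Complex.exp_nat_mul, ← Complex.exp_add]
    have harg : ((p+1:ℕ):ℂ) * -(Complex.I*(w₁:ℂ)*(t:ℂ)) + ((q+1:ℕ):ℂ) * (Complex.I*(w₂:ℂ)*(t:ℂ)) = 0 := by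
      push_cast
      linear_combination (-(Complex.I*(t:ℂ))) * hkC
    rw [harg, Complex.exp_zero]
  have hne1 : γ₁ t ≠ 0 := by
    rw [hγ₁ t]
    exact mul_ne_zero (by exact_mod_cast ha.ne') (Complex.exp_ne_zero _)
  have hne2 : γ₂ t ≠ 0 := by
    rw [hγ₂ t]
    exact mul_ne_zero (by exact_mod_cast hb.ne') (Complex.exp_ne_zero _)
  refine ⟨hne1, hne2, ?_, ?_⟩
  · rw [hd1, hγ₁ t, hγ₂ t, hconj1, hconj2]
    calc (a:ℂ) * (Complex.exp (Complex.I*(w₁:ℂ)*(t:ℂ)) * (Complex.I*(w₁:ℂ))) *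
          ((a:ℂ) * Complex.exp (-(Complex.I*(w₁:ℂ)*(t:ℂ))))
        = Complex.I * ((a:ℂ)^2 * (w₁:ℂ)) *
          (Complex.exp (Complex.I*(w₁:ℂ)*(t:ℂ)) * Complex.exp (-(Complex.I*(w₁:ℂ)*(t:ℂ)))) := by ring
      _ = Complex.I * ((a:ℂ)^(p+1) * (b:ℂ)^(q+1)) * 1 := by rw [hc1C, e1]
      _ = Complex.I * ((a:ℂ)^(p+1) * (b:ℂ)^(q+1)) *
          (Complex.exp (-(Complex.I*(w₁:ℂ)*(t:ℂ))) ^ (p+1) * Complex.exp (Complex.I*(w₂:ℂ)*(t:ℂ)) ^ (q+1)) := by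
            rw [e2]
      _ = Complex.I * ((a:ℂ) * Complex.exp (-(Complex.I*(w₁:ℂ)*(t:ℂ)))) ^ (p+1) *
          ((b:ℂ) * Complex.exp (Complex.I*(w₂:ℂ)*(t:ℂ))) ^ (q+1) := by
            rw [mul_pow, mul_pow]; ring
  · rw [hd2, hγ₁ t, hγ₂ t, hconj1, hconj2]
    calc (b:ℂ) * (Complex.exp (-(Complex.I*(w₂:ℂ)*(t:ℂ))) * (-(Complex.I*(w₂:ℂ)))) *
          ((b:ℂ) * Complex.exp (Complex.I*(w₂:ℂ)*(t:ℂ)))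
        = -(Complex.I * ((b:ℂ)^2 * (w₂:ℂ)) *
          (Complex.exp (-(Complex.I*(w₂:ℂ)*(t:ℂ))) * Complex.exp (Complex.I*(w₂:ℂ)*(t:ℂ)))) := by ring
      _ = -(Complex.I * ((a:ℂ)^(p+1) * (b:ℂ)^(q+1)) * 1) := by rw [hc2C, e1']
      _ = -(Complex.I * ((a:ℂ)^(p+1) * (b:ℂ)^(q+1)) *
          (Complex.exp (-(Complex.I*(w₁:ℂ)*(t:ℂ))) ^ (p+1) * Complex.exp (Complex.I*(w₂:ℂ)*(t:ℂ)) ^ (q+1))) := by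
            rw [e2]
      _ = -(Complex.I * ((a:ℂ) * Complex.exp (-(Complex.I*(w₁:ℂ)*(t:ℂ)))) ^ (p+1) *
          ((b:ℂ) * Complex.exp (Complex.I*(w₂:ℂ)*(t:ℂ))) ^ (q+1)) := by
            rw [mul_pow, mul_pow]; ring
end

section
/- Let α = (α₁, α₂) : I → ℂ² be a curve of type (3) with initial condition α(0) = (a₁, a₂), and let γ = (γ₁, γ₂) : I' → ℂ² be a curve of type (6) with initial condition γ(0) = (b₁, b₂). Then for all t ∈ I and s ∈ I': α₁'(t)·conj(α₁(t))·γ₁(s)·conj(γ₁'(s)) + α₂'(t)·conj(α₂(t))·γ₂(s)·conj(γ₂'(s)) = 0. (This is the Hermitian inner product of the two coordinate vector fields ∂φ/∂t and ∂φ/∂s of the map φ(t,s) = (α₁(t)γ₁(s), α₂(t)γ₂(s)); its vanishing means φ is a Lagrangian immersion of ℝ² into ℂ² with orthogonal coordinate directions.) -/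
/-- the Hermitian product of the coordinate vector fields of
`φ(t,s) = (α₁(t)γ₁(s), α₂(t)γ₂(s))` vanishes. -/
theorem stmt_14 (p q : ℕ) (a₁ a₂ : ℝ) (ha₁ : 0 < a₁) (ha₂ : 0 < a₂)
    (b₁ b₂ : ℝ) (hb₁ : 0 < b₁) (hb₂ : 0 < b₂)
    (I : Set ℝ) (hIopen : IsOpen I) (hIconn : I.OrdConnected) (hI0 : (0 : ℝ) ∈ I)
    (α₁ α₂ : ℝ → ℂ)
    (hne : ∀ t ∈ I, α₁ t ≠ 0 ∧ α₂ t ≠ 0)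
    (hdiff : ∀ t ∈ I, DifferentiableAt ℝ α₁ t ∧ DifferentiableAt ℝ α₂ t)
    (hode₁ : ∀ t ∈ I, deriv α₁ t * (starRingEnd ℂ) (α₁ t) =
      Complex.I * ((starRingEnd ℂ) (α₁ t)) ^ (p + 1) * ((starRingEnd ℂ) (α₂ t)) ^ (q + 1))
    (hode₂ : ∀ t ∈ I, deriv α₂ t * (starRingEnd ℂ) (α₂ t) =
      Complex.I * ((starRingEnd ℂ) (α₁ t)) ^ (p + 1) * ((starRingEnd ℂ) (α₂ t)) ^ (q + 1))
    (hinit₁ : α₁ 0 = (a₁ : ℂ)) (hinit₂ : α₂ 0 = (a₂ : ℂ))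
    (I' : Set ℝ) (hIopen : IsOpen I') (hIconn : I'.OrdConnected) (hI0 : (0 : ℝ) ∈ I')
    (γ₁ γ₂ : ℝ → ℂ)
    (hγne : ∀ t ∈ I', γ₁ t ≠ 0 ∧ γ₂ t ≠ 0)
    (hγdiff : ∀ t ∈ I', DifferentiableAt ℝ γ₁ t ∧ DifferentiableAt ℝ γ₂ t)
    (hγode₁ : ∀ t ∈ I', deriv γ₁ t * (starRingEnd ℂ) (γ₁ t) =
      Complex.I * ((starRingEnd ℂ) (γ₁ t)) ^ (p + 1) * ((starRingEnd ℂ) (γ₂ t)) ^ (q + 1))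
    (hγode₂ : ∀ t ∈ I', deriv γ₂ t * (starRingEnd ℂ) (γ₂ t) =
      -(Complex.I * ((starRingEnd ℂ) (γ₁ t)) ^ (p + 1) * ((starRingEnd ℂ) (γ₂ t)) ^ (q + 1)))
    (hγinit₁ : γ₁ 0 = (b₁ : ℂ)) (hγinit₂ : γ₂ 0 = (b₂ : ℂ)) :
    ∀ t ∈ I, ∀ s ∈ I',
      deriv α₁ t * (starRingEnd ℂ) (α₁ t) * γ₁ s * (starRingEnd ℂ) (deriv γ₁ s) +
        deriv α₂ t * (starRingEnd ℂ) (α₂ t) * γ₂ s * (starRingEnd ℂ) (deriv γ₂ s) = 0 := by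
  intro t ht s hs
  have h1 := hode₁ t ht
  have h2 := hode₂ t ht
  have g1 := hγode₁ s hs
  have g2 := hγode₂ s hs
  have g1' := congrArg (starRingEnd ℂ) g1
  have g2' := congrArg (starRingEnd ℂ) g2
  simp only [map_mul, map_neg, map_pow, Complex.conj_conj, Complex.conj_I] at g1' g2'
  have t1 : deriv α₁ t * (starRingEnd ℂ) (α₁ t) * γ₁ s * (starRingEnd ℂ) (deriv γ₁ s)
      = (deriv α₁ t * (starRingEnd ℂ) (α₁ t)) * ((starRingEnd ℂ) (deriv γ₁ s) * γ₁ s) := by ring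
  have t2 : deriv α₂ t * (starRingEnd ℂ) (α₂ t) * γ₂ s * (starRingEnd ℂ) (deriv γ₂ s)
      = (deriv α₂ t * (starRingEnd ℂ) (α₂ t)) * ((starRingEnd ℂ) (deriv γ₂ s) * γ₂ s) := by ring
  rw [t1, t2, h1, h2, g1', g2']
  ring
end

section
/- Let α = (α₁, α₂) : I → ℂ² be a curve of type (3) with initial condition α(0) = (a₁, a₂), and let γ = (γ₁, γ₂) : I' → ℂ² be a curve of type (6) with initial condition γ(0) = (b₁, b₂). Then for all t ∈ I and s ∈ I': α₁'(t)·γ₁(s)·α₂(t)·γ₂'(s) − α₂'(t)·γ₂(s)·α₁(t)·γ₁'(s) = (|α₁(t)|²·|γ₂(s)|² + |α₂(t)|²·|γ₁(s)|²)·conj(α₁(t))^p·conj(α₂(t))^q·conj(γ₁(s))^p·conj(γ₂(s))^q. (This computes the complex determinant det{∂φ/∂t, ∂φ/∂s} for φ(t,s) = (α₁(t)γ₁(s), α₂(t)γ₂(s)), and shows that the Lagrangian angle β_φ of φ satisfies β_φ + p·arg φ₁ + q·arg φ₂ = 0.) -/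
/-- the complex determinant of the coordinate vector fields of
`φ(t,s) = (α₁(t)γ₁(s), α₂(t)γ₂(s))`. -/
theorem stmt_15 (p q : ℕ) (a₁ a₂ : ℝ) (ha₁ : 0 < a₁) (ha₂ : 0 < a₂)
    (b₁ b₂ : ℝ) (hb₁ : 0 < b₁) (hb₂ : 0 < b₂)
    (I : Set ℝ) (hIopen : IsOpen I) (hIconn : I.OrdConnected) (hI0 : (0 : ℝ) ∈ I)
    (α₁ α₂ : ℝ → ℂ)
    (hne : ∀ t ∈ I, α₁ t ≠ 0 ∧ α₂ t ≠ 0)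
    (hdiff : ∀ t ∈ I, DifferentiableAt ℝ α₁ t ∧ DifferentiableAt ℝ α₂ t)
    (hode₁ : ∀ t ∈ I, deriv α₁ t * (starRingEnd ℂ) (α₁ t) =
      Complex.I * ((starRingEnd ℂ) (α₁ t)) ^ (p + 1) * ((starRingEnd ℂ) (α₂ t)) ^ (q + 1))
    (hode₂ : ∀ t ∈ I, deriv α₂ t * (starRingEnd ℂ) (α₂ t) =
      Complex.I * ((starRingEnd ℂ) (α₁ t)) ^ (p + 1) * ((starRingEnd ℂ) (α₂ t)) ^ (q + 1))
    (hinit₁ : α₁ 0 = (a₁ : ℂ)) (hinit₂ : α₂ 0 = (a₂ : ℂ))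
    (I' : Set ℝ) (hIopen : IsOpen I') (hIconn : I'.OrdConnected) (hI0 : (0 : ℝ) ∈ I')
    (γ₁ γ₂ : ℝ → ℂ)
    (hγne : ∀ t ∈ I', γ₁ t ≠ 0 ∧ γ₂ t ≠ 0)
    (hγdiff : ∀ t ∈ I', DifferentiableAt ℝ γ₁ t ∧ DifferentiableAt ℝ γ₂ t)
    (hγode₁ : ∀ t ∈ I', deriv γ₁ t * (starRingEnd ℂ) (γ₁ t) =
      Complex.I * ((starRingEnd ℂ) (γ₁ t)) ^ (p + 1) * ((starRingEnd ℂ) (γ₂ t)) ^ (q + 1))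
    (hγode₂ : ∀ t ∈ I', deriv γ₂ t * (starRingEnd ℂ) (γ₂ t) =
      -(Complex.I * ((starRingEnd ℂ) (γ₁ t)) ^ (p + 1) * ((starRingEnd ℂ) (γ₂ t)) ^ (q + 1)))
    (hγinit₁ : γ₁ 0 = (b₁ : ℂ)) (hγinit₂ : γ₂ 0 = (b₂ : ℂ)) :
    ∀ t ∈ I, ∀ s ∈ I',
      deriv α₁ t * γ₁ s * (α₂ t * deriv γ₂ s) - deriv α₂ t * γ₂ s * (α₁ t * deriv γ₁ s) =
        ((‖α₁ t‖ ^ 2 * ‖γ₂ s‖ ^ 2 +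
            ‖α₂ t‖ ^ 2 * ‖γ₁ s‖ ^ 2 : ℝ) : ℂ) *
          ((starRingEnd ℂ) (α₁ t)) ^ p * ((starRingEnd ℂ) (α₂ t)) ^ q *
          ((starRingEnd ℂ) (γ₁ s)) ^ p * ((starRingEnd ℂ) (γ₂ s)) ^ q := by

  intro t ht s hs
  obtain ⟨h1, h2⟩ := hne t ht
  obtain ⟨h3, h4⟩ := hγne s hs
  have c1 : (starRingEnd ℂ) (α₁ t) ≠ 0 := by simpa using h1
  have c2 : (starRingEnd ℂ) (α₂ t) ≠ 0 := by simpa using h2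
  have c3 : (starRingEnd ℂ) (γ₁ s) ≠ 0 := by simpa using h3
  have c4 : (starRingEnd ℂ) (γ₂ s) ≠ 0 := by simpa using h4
  have e1 : deriv α₁ t = Complex.I * ((starRingEnd ℂ) (α₁ t)) ^ p *
      ((starRingEnd ℂ) (α₂ t)) ^ (q + 1) :=
    mul_right_cancel₀ c1 (by rw [hode₁ t ht]; ring)
  have e2 : deriv α₂ t = Complex.I * ((starRingEnd ℂ) (α₁ t)) ^ (p + 1) *
      ((starRingEnd ℂ) (α₂ t)) ^ q :=
    mul_right_cancel₀ c2 (by rw [hode₂ t ht]; ring)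
  have e3 : deriv γ₁ s = Complex.I * ((starRingEnd ℂ) (γ₁ s)) ^ p *
      ((starRingEnd ℂ) (γ₂ s)) ^ (q + 1) :=
    mul_right_cancel₀ c3 (by rw [hγode₁ s hs]; ring)
  have e4 : deriv γ₂ s = -(Complex.I * ((starRingEnd ℂ) (γ₁ s)) ^ (p + 1) *
      ((starRingEnd ℂ) (γ₂ s)) ^ q) :=
    mul_right_cancel₀ c4 (by rw [hγode₂ s hs]; ring)
  have n : ∀ z : ℂ, ((‖z‖ ^ 2 : ℝ) : ℂ) = z * (starRingEnd ℂ) z := by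
    intro z
    rw [Complex.sq_norm]
    exact (Complex.mul_conj z).symm
  rw [e1, e2, e3, e4, Complex.ofReal_add, Complex.ofReal_mul, Complex.ofReal_mul,
    n, n, n, n]
  ring_nf
  simp only [Complex.I_sq]
  ring
end

section
/- Fix nonnegative integers p, q, a real number λ > 0 with λ^{p+q} = (p+1)^p·(q+1)^q, and let γ : ℝ → ℂ² be the curve γ(t) = (√((p+1)/λ)·exp(i·√((q+1)/(p+1))·t), √((q+1)/λ)·exp(−i·√((p+1)/(q+1))·t)). Let α = (α₁, α₂) : I → ℂ² be a curve of type (3) with initial condition α(0) = (a₁, a₂). Then for all t ∈ I and s ∈ ℝ, the point (z₁, z₂) = (α₁(t)·γ₁(s), α₂(t)·γ₂(s)) satisfies |z₁|²/(p+1) − |z₂|²/(q+1) = (a₁² − a₂²)/λ and Re(z₁^{p+1}·z₂^{q+1}) = a₁^{p+1}·a₂^{q+1}·√((p+1)(q+1))/λ. -/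
open Complex

lemma my_const {E : Type*} [NormedAddCommGroup E] [NormedSpace ℝ E]
    {I : Set ℝ} (hconv : Convex ℝ I) (hIopen : IsOpen I)
    {f : ℝ → E} (hf : ∀ t ∈ I, HasDerivAt f 0 t) {t : ℝ} (ht : t ∈ I) {s : ℝ} (hs : s ∈ I) :
    f t = f s := by
  apply hconv.is_const_of_fderivWithin_eq_zero (𝕜 := ℝ)
    (fun x hx => ((hf x hx).differentiableAt).differentiableWithinAt) _ ht hs
  intro x hx
  rw [fderivWithin_of_isOpen hIopen hx, (hf x hx).hasFDerivAt.fderiv]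
  ext
  simp

lemma my_pow_deriv {f : ℝ → ℂ} {f' : ℂ} {x : ℝ} (h : HasDerivAt f f' x) :
    ∀ n : ℕ, HasDerivAt (fun t => f t ^ (n + 1)) (((n : ℂ) + 1) * f x ^ n * f') x
  | 0 => by simpa using h
  | n + 1 => by
    have := (my_pow_deriv h n).mul h
    convert this using 1
    · rfl
    · ext t; simp [pow_succ]
    push_cast
    ring

lemma sq_eq_helper {x y : ℝ} (hx : 0 ≤ x) (hy : 0 ≤ y) (h : x ^ 2 = y ^ 2) : x = y := by
  nlinarith




/-- the surface `(α₁(t)γ₁(s), α₂(t)γ₂(s))`, with `γ` the explicit curve of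
Lemma 2.5, lies in the set described in Corollary 2. -/
theorem stmt_16 (p q : ℕ) (a₁ a₂ : ℝ) (ha₁ : 0 < a₁) (ha₂ : 0 < a₂) (l : ℝ) (hl : 0 < l) (hlpq : l ^ (p + q) = ((p : ℝ) + 1) ^ p * ((q : ℝ) + 1) ^ q)
    (I : Set ℝ) (hIopen : IsOpen I) (hIconn : I.OrdConnected) (hI0 : (0 : ℝ) ∈ I)
    (α₁ α₂ : ℝ → ℂ)
    (hne : ∀ t ∈ I, α₁ t ≠ 0 ∧ α₂ t ≠ 0)
    (hdiff : ∀ t ∈ I, DifferentiableAt ℝ α₁ t ∧ DifferentiableAt ℝ α₂ t)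
    (hode₁ : ∀ t ∈ I, deriv α₁ t * (starRingEnd ℂ) (α₁ t) =
      Complex.I * ((starRingEnd ℂ) (α₁ t)) ^ (p + 1) * ((starRingEnd ℂ) (α₂ t)) ^ (q + 1))
    (hode₂ : ∀ t ∈ I, deriv α₂ t * (starRingEnd ℂ) (α₂ t) =
      Complex.I * ((starRingEnd ℂ) (α₁ t)) ^ (p + 1) * ((starRingEnd ℂ) (α₂ t)) ^ (q + 1))
    (hinit₁ : α₁ 0 = (a₁ : ℂ)) (hinit₂ : α₂ 0 = (a₂ : ℂ))
    (γ₁ γ₂ : ℝ → ℂ)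
    (hγ₁ : ∀ t : ℝ, γ₁ t = (Real.sqrt (((p : ℝ) + 1) / l) : ℂ) *
      Complex.exp (Complex.I * ((Real.sqrt (((q : ℝ) + 1) / ((p : ℝ) + 1)) : ℝ) : ℂ) * (t : ℂ)))
    (hγ₂ : ∀ t : ℝ, γ₂ t = (Real.sqrt (((q : ℝ) + 1) / l) : ℂ) *
      Complex.exp (-(Complex.I * ((Real.sqrt (((p : ℝ) + 1) / ((q : ℝ) + 1)) : ℝ) : ℂ) * (t : ℂ)))) :
    ∀ t ∈ I, ∀ s : ℝ,
      ‖α₁ t * γ₁ s‖ ^ 2 / ((p : ℝ) + 1) -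
          ‖α₂ t * γ₂ s‖ ^ 2 / ((q : ℝ) + 1) = (a₁ ^ 2 - a₂ ^ 2) / l ∧
        ((α₁ t * γ₁ s) ^ (p + 1) * (α₂ t * γ₂ s) ^ (q + 1)).re =
          a₁ ^ (p + 1) * a₂ ^ (q + 1) * Real.sqrt (((p : ℝ) + 1) * ((q : ℝ) + 1)) / l := by
  have hconv : Convex ℝ I := convex_iff_ordConnected.mpr hIconn
  have hp1 : (0:ℝ) < (p:ℝ) + 1 := by positivity
  have hq1 : (0:ℝ) < (q:ℝ) + 1 := by positivity
  -- conserved quantity 1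
  have key1 : ∀ t ∈ I, Complex.normSq (α₁ t) - Complex.normSq (α₂ t) = a₁ ^ 2 - a₂ ^ 2 := by
    have hc : ∀ t ∈ I, HasDerivAt
        (fun t => α₁ t * (starRingEnd ℂ) (α₁ t) - α₂ t * (starRingEnd ℂ) (α₂ t)) 0 t := by
      intro x hx
      have h₁ : HasDerivAt α₁ (deriv α₁ x) x := (hdiff x hx).1.hasDerivAt
      have h₂ : HasDerivAt α₂ (deriv α₂ x) x := (hdiff x hx).2.hasDerivAt
      have H := ((h₁.mul h₁.star).sub (h₂.mul h₂.star))
      convert H using 1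
      · rfl
      · rfl
      have c1 : α₁ x * (starRingEnd ℂ) (deriv α₁ x)
          = (starRingEnd ℂ) (deriv α₁ x * (starRingEnd ℂ) (α₁ x)) := by
        rw [map_mul, Complex.conj_conj]; ring
      have c2 : α₂ x * (starRingEnd ℂ) (deriv α₂ x)
          = (starRingEnd ℂ) (deriv α₂ x * (starRingEnd ℂ) (α₂ x)) := by
        rw [map_mul, Complex.conj_conj]; ring
      simp only [← starRingEnd_apply]
      rw [c1, c2, hode₁ x hx, hode₂ x hx]
      ring
    intro t ht
    have h := my_const hconv hIopen hc ht hI0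
    simp only [hinit₁, hinit₂, Complex.mul_conj, Complex.conj_ofReal] at h
    rw [pow_two, pow_two]
    exact_mod_cast h
  -- conserved quantity 2
  have key2 : ∀ t ∈ I, ((α₁ t) ^ (p + 1) * (α₂ t) ^ (q + 1)).re = a₁ ^ (p + 1) * a₂ ^ (q + 1) := by
    have hc : ∀ t ∈ I, HasDerivAt (fun t => ((α₁ t) ^ (p + 1) * (α₂ t) ^ (q + 1)).re) 0 t := by
      intro x hx
      have h₁ : HasDerivAt α₁ (deriv α₁ x) x := (hdiff x hx).1.hasDerivAt
      have h₂ : HasDerivAt α₂ (deriv α₂ x) x := (hdiff x hx).2.hasDerivAt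
      have hne₁ : (starRingEnd ℂ) (α₁ x) ≠ 0 := by
        simpa using (hne x hx).1
      have hne₂ : (starRingEnd ℂ) (α₂ x) ≠ 0 := by
        simpa using (hne x hx).2
      have hd₁ : deriv α₁ x = Complex.I * ((starRingEnd ℂ) (α₁ x)) ^ p *
          ((starRingEnd ℂ) (α₂ x)) ^ (q + 1) := by
        apply mul_right_cancel₀ hne₁
        rw [hode₁ x hx]; ring
      have hd₂ : deriv α₂ x = Complex.I * ((starRingEnd ℂ) (α₁ x)) ^ (p + 1) *
          ((starRingEnd ℂ) (α₂ x)) ^ q := by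
        apply mul_right_cancel₀ hne₂
        rw [hode₂ x hx]; ring
      have H := (my_pow_deriv h₁ p).mul (my_pow_deriv h₂ q)
      have HD : HasDerivAt (fun t => (α₁ t) ^ (p + 1) * (α₂ t) ^ (q + 1))
          (Complex.I * (((p : ℂ) + 1) * ((Complex.normSq (α₁ x) : ℝ) : ℂ) ^ p *
              ((Complex.normSq (α₂ x) : ℝ) : ℂ) ^ (q + 1) +
            ((q : ℂ) + 1) * ((Complex.normSq (α₁ x) : ℝ) : ℂ) ^ (p + 1) *
              ((Complex.normSq (α₂ x) : ℝ) : ℂ) ^ q)) x := by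
        convert H using 1
        · rfl
        · rfl
        rw [hd₁, hd₂]
        rw [show ((Complex.normSq (α₁ x) : ℝ) : ℂ) = α₁ x * (starRingEnd ℂ) (α₁ x) from
          (Complex.mul_conj _).symm]
        rw [show ((Complex.normSq (α₂ x) : ℝ) : ℂ) = α₂ x * (starRingEnd ℂ) (α₂ x) from
          (Complex.mul_conj _).symm]
        push_cast
        ring
      have H2 := Complex.reCLM.hasFDerivAt.comp_hasDerivAt x HD
      convert H2 using 1
      · rfl
      · rfl
      · rfl
      simp [Complex.mul_re, Complex.mul_im, ← Complex.ofReal_pow]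
    intro t ht
    have h := my_const hconv hIopen hc ht hI0
    simp only [hinit₁, hinit₂] at h
    rw [h, ← Complex.ofReal_pow, ← Complex.ofReal_pow, ← Complex.ofReal_mul, Complex.ofReal_re]
  set b₁ := Real.sqrt (((q:ℝ)+1)/((p:ℝ)+1)) with hb₁def
  set b₂ := Real.sqrt (((p:ℝ)+1)/((q:ℝ)+1)) with hb₂def
  have hbb : ((p:ℝ)+1) * b₁ = ((q:ℝ)+1) * b₂ := by
    apply sq_eq_helper (by positivity) (by positivity)
    rw [mul_pow, mul_pow, hb₁def, hb₂def, Real.sq_sqrt (by positivity), Real.sq_sqrt (by positivity)]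
    field_simp
  have hL : l ^ (p+q) ≠ 0 := by positivity
  have hcval : Real.sqrt (((p:ℝ)+1)/l) ^ (p+1) * Real.sqrt (((q:ℝ)+1)/l) ^ (q+1)
      = Real.sqrt (((p:ℝ)+1)*((q:ℝ)+1)) / l := by
    apply sq_eq_helper (by positivity) (by positivity)
    have h1 : (Real.sqrt (((p:ℝ)+1)/l) ^ (p+1) * Real.sqrt (((q:ℝ)+1)/l) ^ (q+1)) ^ 2
        = (Real.sqrt (((p:ℝ)+1)/l) ^ 2) ^ (p+1) * (Real.sqrt (((q:ℝ)+1)/l) ^ 2) ^ (q+1) := by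
      ring
    rw [h1, Real.sq_sqrt (by positivity), Real.sq_sqrt (by positivity),
      show (Real.sqrt (((p:ℝ)+1)*((q:ℝ)+1))/l)^2 = (((p:ℝ)+1)*((q:ℝ)+1))/l^2 by
        rw [div_pow, Real.sq_sqrt (by positivity)],
      div_pow, div_pow, div_mul_div_comm]
    have hnum : ((p:ℝ)+1)^(p+1) * ((q:ℝ)+1)^(q+1) = ((((p:ℝ)+1)*((q:ℝ)+1)) * l^(p+q)) := by
      rw [hlpq]; ring
    have hden : l^(p+1) * l^(q+1) = l^2 * l^(p+q) := by ring
    rw [hnum, hden, mul_div_mul_right _ _ hL]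
  intro t ht s
  have e₁ : ‖γ₁ s‖ = Real.sqrt (((p:ℝ)+1)/l) := by
    rw [hγ₁ s, norm_mul, Complex.norm_real, Complex.norm_exp, Real.norm_eq_abs,
      _root_.abs_of_nonneg (Real.sqrt_nonneg _),
      show (Complex.I * (b₁:ℂ) * (s:ℂ)).re = 0 by simp, Real.exp_zero, mul_one]
  have e₂ : ‖γ₂ s‖ = Real.sqrt (((q:ℝ)+1)/l) := by
    rw [hγ₂ s, norm_mul, Complex.norm_real, Complex.norm_exp, Real.norm_eq_abs,
      _root_.abs_of_nonneg (Real.sqrt_nonneg _),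
      show (-(Complex.I * (b₂:ℂ) * (s:ℂ))).re = 0 by simp, Real.exp_zero, mul_one]
  constructor
  · rw [norm_mul, norm_mul, e₁, e₂, mul_pow, mul_pow, Real.sq_sqrt (by positivity),
      Real.sq_sqrt (by positivity), Complex.sq_norm, Complex.sq_norm,
      show Complex.normSq (α₁ t) * (((p:ℝ)+1)/l) / ((p:ℝ)+1) = Complex.normSq (α₁ t) / l by
        field_simp,
      show Complex.normSq (α₂ t) * (((q:ℝ)+1)/l) / ((q:ℝ)+1) = Complex.normSq (α₂ t) / l by
        field_simp,
      div_sub_div_same, key1 t ht]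
  · have hγprod : γ₁ s ^ (p+1) * γ₂ s ^ (q+1)
        = ((Real.sqrt (((p:ℝ)+1)*((q:ℝ)+1)) / l : ℝ) : ℂ) := by
      rw [hγ₁ s, hγ₂ s, mul_pow, mul_pow, ← Complex.exp_nat_mul, ← Complex.exp_nat_mul,
        mul_mul_mul_comm, ← Complex.exp_add, ← Complex.ofReal_pow, ← Complex.ofReal_pow,
        ← Complex.ofReal_mul]
      have hzero : ((p+1 : ℕ) : ℂ) * (Complex.I * (b₁:ℂ) * (s:ℂ))
          + ((q+1:ℕ):ℂ) * (-(Complex.I * (b₂:ℂ) * (s:ℂ))) = 0 := by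
        have hcc : ((((p:ℝ)+1) * b₁ : ℝ) : ℂ) = ((((q:ℝ)+1)*b₂ : ℝ) : ℂ) := by
          exact_mod_cast congrArg (fun x : ℝ => (x : ℂ)) hbb
        push_cast at hcc ⊢
        linear_combination Complex.I * (s:ℂ) * hcc
      rw [hzero, Complex.exp_zero, mul_one, hcval]
    rw [show (α₁ t * γ₁ s)^(p+1) * (α₂ t * γ₂ s)^(q+1)
        = (γ₁ s ^ (p+1) * γ₂ s ^ (q+1)) * (α₁ t ^ (p+1) * α₂ t ^ (q+1)) by ring,
      hγprod, Complex.re_ofReal_mul, key2 t ht]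
    ring
end

section
/- Let n ≥ 2 and let M be an n×n complex Hermitian matrix (Mᴴ = M) such that Im(Trace(X·M·Y)) = 0 for all n×n complex matrices X, Y that are skew-Hermitian (Xᴴ = −X) and traceless (Trace X = 0). Then there exists a real number λ such that M = λ·I, where I is the identity matrix. -/
open Matrix

lemma sb_ct {n : ℕ} (i j : Fin n) (c : ℂ) :
    (single i j c).conjTranspose = single j i ((starRingEnd ℂ) c) := by
  ext a b
  simp [conjTranspose_apply, single, and_comm]
  aesop

lemma sb_neg {n : ℕ} (i j : Fin n) (c : ℂ) :
    single i j (-c) = -single i j c := by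
  ext a b
  simp [single]
  split <;> simp

lemma sb_trace {n : ℕ} (i j : Fin n) (c : ℂ) :
    (single i j c).trace = if i = j then c else 0 := by
  rcases eq_or_ne i j with rfl | hij
  · simp [Matrix.trace, Matrix.diag, single, Finset.sum_ite_eq]
  · simp only [Matrix.trace, Matrix.diag, single, of_apply, if_neg hij]
    exact Finset.sum_eq_zero fun x _ => by aesop

lemma tr_helper {n : ℕ} (a b c d : Fin n) (x y : ℂ) (M : Matrix (Fin n) (Fin n) ℂ) :
    (single a b x * M * single c d y).trace
      = if d = a then x * M b c * y else 0 := by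
  simp [Matrix.trace, Matrix.diag, Matrix.mul_apply, single, Finset.sum_ite_eq,
    Finset.sum_ite_eq', ite_and, mul_comm, mul_assoc, mul_left_comm]
  aesop

/-- a Hermitian matrix `M` with `Im (Trace (X·M·Y)) = 0` for all traceless
skew-Hermitian `X, Y` is a real multiple of the identity. -/
theorem stmt_18 (n : ℕ) (hn : 2 ≤ n) (M : Matrix (Fin n) (Fin n) ℂ)
    (hM : M.conjTranspose = M)
    (h : ∀ X Y : Matrix (Fin n) (Fin n) ℂ, X.conjTranspose = -X → X.trace = 0 →
      Y.conjTranspose = -Y → Y.trace = 0 → ((X * M * Y).trace).im = 0) :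
    ∃ l : ℝ, M = (l : ℂ) • (1 : Matrix (Fin n) (Fin n) ℂ) := by
  have hconj : ∀ j k : Fin n, M k j = (starRingEnd ℂ) (M j k) := by
    intro j k
    have := congrFun (congrFun hM k) j
    simpa [conjTranspose_apply] using this.symm
  have hdiag_im : ∀ j : Fin n, (M j j).im = 0 := by
    intro j
    exact Complex.conj_eq_iff_im.mp (hconj j j).symm
  have key : ∀ j k : Fin n, j ≠ k → M j k = 0 ∧ M j j = M k k := by
    intro j k hjk
    set A : Matrix (Fin n) (Fin n) ℂ := single j k 1 - single k j 1 with hA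
    set B : Matrix (Fin n) (Fin n) ℂ :=
      single j k Complex.I + single k j Complex.I with hB
    set C : Matrix (Fin n) (Fin n) ℂ :=
      single j j Complex.I - single k k Complex.I with hC
    have hkj : k ≠ j := hjk.symm
    have hAsk : A.conjTranspose = -A := by
      simp [hA, conjTranspose_sub, sb_ct]
    have hAtr : A.trace = 0 := by
      simp [hA, trace_sub, sb_trace, hjk, hkj]
    have hBsk : B.conjTranspose = -B := by
      simp only [hB, conjTranspose_add, sb_ct, Complex.conj_I, sb_neg]
      abel
    have hBtr : B.trace = 0 := by
      simp [hB, trace_add, sb_trace, hjk, hkj]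
    have hCsk : C.conjTranspose = -C := by
      simp only [hC, conjTranspose_sub, sb_ct, Complex.conj_I, sb_neg]
      abel
    have hCtr : C.trace = 0 := by
      simp [hC, trace_sub, sb_trace]
    have h1 := h C A hCsk hCtr hAsk hAtr
    have e1 : (C * M * A).trace = -Complex.I * (M j k + M k j) := by
      simp only [hC, hA, sub_mul, mul_sub, trace_sub, tr_helper, if_neg hjk, if_neg hkj,
        if_pos rfl, if_true, eq_self_iff_true]
      ring
    rw [e1] at h1
    have h2 := h C B hCsk hCtr hBsk hBtr
    have e2 : (C * M * B).trace = M k j - M j k := by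
      simp only [hC, hB, sub_mul, mul_add, trace_add, trace_sub, tr_helper, if_neg hjk,
        if_neg hkj, if_pos rfl, if_true, eq_self_iff_true]
      ring_nf
      rw [Complex.I_sq]
      ring
    rw [e2] at h2
    have h3 := h A B hAsk hAtr hBsk hBtr
    have e3 : (A * M * B).trace = Complex.I * (M k k - M j j) := by
      simp only [hA, hB, sub_mul, mul_add, trace_add, trace_sub, tr_helper, if_neg hjk,
        if_neg hkj, if_pos rfl, if_true, eq_self_iff_true]
      ring
    rw [e3] at h3
    have hc := hconj j k
    rw [hc] at h1 h2
    simp only [Complex.mul_im, Complex.add_im, Complex.add_re, Complex.sub_im,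
      Complex.neg_im, Complex.neg_re, Complex.I_re, Complex.I_im, Complex.conj_re,
      Complex.conj_im, Complex.sub_re] at h1 h2 h3
    constructor
    · rw [Complex.ext_iff]
      simp only [Complex.zero_re, Complex.zero_im]
      constructor <;> [skip; skip] <;> nlinarith [h1, h2]
    · rw [Complex.ext_iff]
      constructor
      · nlinarith [h3]
      · rw [hdiag_im j, hdiag_im k]
  have h0 : (0 : ℕ) < n := by omega
  set i0 : Fin n := ⟨0, h0⟩ with hi0
  refine ⟨(M i0 i0).re, ?_⟩
  ext i j
  rcases eq_or_ne i j with rfl | hij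
  · have hdiag : M i i = M i0 i0 := by
      rcases eq_or_ne i i0 with rfl | hne
      · rfl
      · exact (key i i0 hne).2
    rw [hdiag]
    simp only [Matrix.smul_apply, Matrix.one_apply_eq, smul_eq_mul, mul_one]
    rw [Complex.ext_iff]
    simp [hdiag_im i0]
  · rw [(key i j hij).1]
    simp [Matrix.one_apply, hij]
end
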